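/- arXiv:2005.03102 — 11 statements merged into one kernel-verified Lean document; each statement's English description precedes it below -/
import Mathlib

section
/- Let Σ be a finite alphabet of size σ ≥ 2, let b ≥ 2 and k ≥ 1, let F_{p,p+k} denote the set of all sequences of length p+k over Σ having period p, and let F = ⋃_{p=1}^{b-1} F_{p,p+k}. Then for every n, the following three sets of sequences of length n over Σ coincide: (1) the set A(n;F) of sequences avoiding F, (2) the set C_DB(n,b,k) of (b,k)-constrained de Bruijn sequences, and (3) the intersection ⋂_{i=1}^{b-1} C_LP(n, i+k-1, i). -/
/-- The window `s[i, i+k-1]` (0-based start `i`, length `k`). -/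
def window {A : Type*} (s : List A) (i k : ℕ) : List A := (s.drop i).take k

/-- `s` has period `p`: `s_i = s_{i+p}` whenever both indices are in range. -/
def HasPeriod {A : Type*} (s : List A) (p : ℕ) : Prop :=
  ∀ i : ℕ, i + p < s.length → s[i]? = s[i + p]?

/-- `s` is a `(b,k)`-constrained de Bruijn sequence: any two windows of length `k`
starting at distinct positions at distance at most `b-1` are distinct. -/
def IsCDB {A : Type*} (s : List A) (b k : ℕ) : Prop :=
  ∀ i j : ℕ, i < j → j - i ≤ b - 1 → j + k ≤ s.length → window s i k ≠ window s j k

/-- `s` is `m`-limited length for period-`p` substrings. -/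
def IsLP {A : Type*} (s : List A) (m p : ℕ) : Prop :=
  ∀ t : List A, t <:+: s → HasPeriod t p → t.length ≤ m

/-- `s` avoids every pattern in `F`. -/
def Avoids {A : Type*} (s : List A) (F : Set (List A)) : Prop :=
  ∀ t ∈ F, ¬ t <:+: s

/-!
A period-`p` factor of length `p + k` starting at position `i` is exactly a coincidence of the
two length-`k` windows at positions `i` and `i + p`. Hence forbidding periodic factors of
length `p + k` for `1 ≤ p ≤ b - 1` is the de Bruijn condition, and it is also the
`(p + k - 1)`-limited-length condition for period `p`, since every longer period-`p` factor has
a period-`p` prefix of length exactly `p + k`.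
-/

section Window

variable {A : Type*} (s : List A)

lemma window_getElem? (i k j : ℕ) (hj : j < k) : (window s i k)[j]? = s[i + j]? := by
  simp [window, hj, List.getElem?_drop]

lemma window_length (i k : ℕ) (h : i + k ≤ s.length) : (window s i k).length = k := by
  simp only [window, List.length_take, List.length_drop]
  omega

lemma window_isInfix (i k : ℕ) : window s i k <:+: s :=
  (List.take_prefix k (s.drop i)).isInfix.trans (List.drop_suffix i s).isInfix

lemma window_eq_window_add_iff_hasPeriod (i p k : ℕ) (h : i + p + k ≤ s.length) :
    window s i k = window s (i + p) k ↔ HasPeriod (window s i (p + k)) p := by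
  have hlen : (window s i (p + k)).length = p + k := window_length _ _ _ (by omega)
  have hshift : ∀ j < k, (window s i (p + k))[j + p]? = s[i + p + j]? := fun j hj => by
    rw [window_getElem? s i (p + k) (j + p) (by omega)]
    congr 1
    omega
  constructor
  · intro heq j hj
    rw [hlen] at hj
    have hj' := congrArg (·[j]?) heq
    simp only [window_getElem? s _ k j (by omega)] at hj'
    rw [window_getElem? s i (p + k) j (by omega), hshift j (by omega), hj']
  · intro hper
    apply List.ext_getElem?
    intro j
    by_cases hj : j < k
    · rw [window_getElem? s i k j hj, window_getElem? s (i + p) k j hj, ← hshift j hj,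
        ← window_getElem? s i (p + k) j (by omega)]
      exact hper j (by omega)
    · rw [List.getElem?_eq_none (by rw [window_length s i k (by omega)]; omega),
        List.getElem?_eq_none (by rw [window_length s (i + p) k (by omega)]; omega)]

lemma exists_periodic_infix_iff_window_eq (p k : ℕ) :
    (∃ t : List A, t <:+: s ∧ t.length = p + k ∧ HasPeriod t p) ↔
      ∃ i, i + p + k ≤ s.length ∧ window s i k = window s (i + p) k := by
  constructor
  · rintro ⟨t, ⟨l, r, rfl⟩, hlen, hper⟩
    have hi : l.length + p + k ≤ (l ++ t ++ r).length := by simp; omega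
    refine ⟨l.length, hi, (window_eq_window_add_iff_hasPeriod _ _ p k hi).mpr ?_⟩
    rwa [window, List.append_assoc, List.drop_left, List.take_left' hlen]
  · rintro ⟨i, hi, heq⟩
    exact ⟨window s i (p + k), window_isInfix s i (p + k), window_length _ _ _ (by omega),
      (window_eq_window_add_iff_hasPeriod s i p k hi).mp heq⟩

end Window

lemma HasPeriod.take {A : Type*} {t : List A} {p : ℕ} (h : HasPeriod t p) (m : ℕ) :
    HasPeriod (t.take m) p := by
  intro j hj
  simp only [List.length_take, lt_min_iff] at hj
  rw [List.getElem?_take, List.getElem?_take, if_pos (by omega), if_pos (by omega)]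
  exact h j (by omega)

section Characterizations

variable {A : Type*} (s : List A)

lemma isCDB_iff_forall_not_exists_periodic_infix (b k : ℕ) :
    IsCDB s b k ↔ ∀ p, 1 ≤ p → p ≤ b - 1 →
      ¬∃ t : List A, t <:+: s ∧ t.length = p + k ∧ HasPeriod t p := by
  simp only [exists_periodic_infix_iff_window_eq, not_exists, not_and]
  constructor
  · intro h p hp hpb i hi
    exact h i (i + p) (by omega) (by omega) (by omega)
  · intro h i j hij hji hj
    obtain ⟨p, rfl⟩ := Nat.exists_eq_add_of_lt hij
    exact h (p + 1) (by omega) (by omega) i (by omega)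

lemma isLP_iff_not_exists_periodic_infix {p : ℕ} (hp : 0 < p) (k : ℕ) :
    IsLP s (p + k - 1) p ↔ ¬∃ t : List A, t <:+: s ∧ t.length = p + k ∧ HasPeriod t p := by
  constructor
  · rintro h ⟨t, ht, hlen, hper⟩
    have := h t ht hper
    omega
  · intro h t ht hper
    by_contra! hlong
    exact h ⟨t.take (p + k), (List.take_prefix _ t).isInfix.trans ht,
      by simp only [List.length_take]; omega, hper.take _⟩

end Characterizations

theorem stmt0_general {A : Type*}
    (b k n : ℕ) (hb : 2 ≤ b)
    (F : Set (List A))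
    (hF : F = {t : List A | ∃ p, 1 ≤ p ∧ p ≤ b - 1 ∧ t.length = p + k ∧ HasPeriod t p}) :
    {s : List A | s.length = n ∧ Avoids s F}
        = {s : List A | s.length = n ∧ IsCDB s b k}
    ∧ {s : List A | s.length = n ∧ IsCDB s b k}
        = ⋂ i ∈ Finset.Icc 1 (b - 1), {s : List A | s.length = n ∧ IsLP s (i + k - 1) i} := by
  have avoids_iff (s : List A) : Avoids s F ↔ ∀ p, 1 ≤ p → p ≤ b - 1 →
      ¬∃ t : List A, t <:+: s ∧ t.length = p + k ∧ HasPeriod t p := by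
    subst hF
    simp only [Avoids, Set.mem_ofPred_eq]
    grind
  refine ⟨?_, ?_⟩
  · ext s
    simp only [Set.mem_ofPred_eq, avoids_iff, isCDB_iff_forall_not_exists_periodic_infix]
  · ext s
    simp only [Set.mem_ofPred_eq, Set.mem_iInter, Finset.mem_Icc,
      isCDB_iff_forall_not_exists_periodic_infix]
    constructor
    · rintro ⟨hlen, h⟩ p ⟨hp, hpb⟩
      exact ⟨hlen, (isLP_iff_not_exists_periodic_infix s hp k).mpr (h p hp hpb)⟩
    · intro h
      refine ⟨(h 1 ⟨le_rfl, by omega⟩).1, fun p hp hpb => ?_⟩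
      exact (isLP_iff_not_exists_periodic_infix s hp k).mp (h p ⟨hp, hpb⟩).2

theorem stmt0 {A : Type*} [Fintype A] (hA : 2 ≤ Fintype.card A)
    (b k n : ℕ) (hb : 2 ≤ b) (hk : 1 ≤ k)
    (F : Set (List A))
    (hF : F = {t : List A | ∃ p, 1 ≤ p ∧ p ≤ b - 1 ∧ t.length = p + k ∧ HasPeriod t p}) :
    {s : List A | s.length = n ∧ Avoids s F}
        = {s : List A | s.length = n ∧ IsCDB s b k}
    ∧ {s : List A | s.length = n ∧ IsCDB s b k}
        = ⋂ i ∈ Finset.Icc 1 (b - 1), {s : List A | s.length = n ∧ IsLP s (i + k - 1) i} :=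
  stmt0_general b k n hb F hF
end

section
/- Let Σ be a finite alphabet of size σ ≥ 2 and let k ≥ 1. Then the asymptotic rate of the (σ^k,k)-constrained de Bruijn codes is zero: the quantity (log_σ |C_DB(n, σ^k, k)|)/n tends to 0 as n → ∞. -/
/-!
In a `(σ^k, k)`-constrained de Bruijn sequence any `σ^k` consecutive windows are pairwise
distinct, so they run through all `σ^k` words of length `k`. Hence each window from position
`σ^k - 1` on is the unique word missing among the `σ^k - 1` windows before it, and the whole
sequence is determined by its first `σ^k + k - 1` symbols. The number of such sequences of
length `n` is therefore bounded independently of `n`, and the rate is zero.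
-/

open Filter Topology

theorem Function.Injective.apply_eq_of_forall_ne {ι α : Type*} [Fintype ι] [Fintype α]
    (hcard : Fintype.card ι = Fintype.card α) {F G : ι → α} (hF : F.Injective)
    (hG : G.Injective) (i : ι) (h : ∀ x, x ≠ i → F x = G x) : F i = G i := by
  obtain ⟨r, hr⟩ := ((Fintype.bijective_iff_injective_and_card F).2 ⟨hF, hcard⟩).2 (G i)
  obtain rfl | hri := eq_or_ne r i
  · exact hr
  · exact absurd (hG ((h r hri).symm.trans hr)) hri

theorem Real.tendsto_logb_div_atTop_zero_of_le {f : ℕ → ℕ} {C : ℕ} (hf : ∀ n, f n ≤ C)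
    (a : ℝ) : Tendsto (fun n : ℕ => Real.logb a (f n) / n) atTop (𝓝 0) := by
  have hlog : Tendsto (fun n : ℕ => Real.log (f n) / n) atTop (𝓝 0) := by
    refine tendsto_of_tendsto_of_tendsto_of_le_of_le tendsto_const_nhds
      (tendsto_const_div_atTop_nhds_zero_nat (Real.log C)) (fun n => ?_) (fun n => ?_)
    · exact div_nonneg (Real.log_natCast_nonneg _) n.cast_nonneg
    · refine div_le_div_of_nonneg_right ?_ n.cast_nonneg
      rcases (f n).eq_zero_or_pos with h0 | hpos
      · simpa [h0] using Real.log_natCast_nonneg C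
      · exact Real.log_le_log (by exact_mod_cast hpos) (by exact_mod_cast hf n)
  simpa [Real.logb, div_div_eq_mul_div, div_right_comm] using hlog.div_const (Real.log a)

section

open List

variable {A : Type*}

theorem length_window {s : List A} {p k : ℕ} (h : p + k ≤ s.length) :
    (window s p k).length = k := by
  simp only [window, length_take, length_drop]
  omega

theorem window_take (s : List A) {p k m : ℕ} (h : p + k ≤ m) :
    window (s.take m) p k = window s p k := by
  simp only [window, drop_take, take_take]
  congr 1
  omega

theorem getElem_eq_getElem_window (s : List A) {j k : ℕ} (hk : 1 ≤ k)
    (h : j + k ≤ s.length) :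
    s[j + k - 1] = (window s j k)[k - 1]'(by rw [length_window h]; omega) := by
  simp only [window, getElem_take, getElem_drop]
  congr 1
  omega

theorem IsCDB.window_injOn {s : List A} {b k : ℕ} (hs : IsCDB s b k) {j : ℕ}
    (hj : j + k ≤ s.length) :
    Set.InjOn (window s · k) (Finset.Icc (j + 1 - b) j) := by
  intro p hp q hq hpq
  simp only [Finset.coe_Icc, Set.mem_Icc] at hp hq
  by_contra hne
  rcases Nat.lt_or_gt_of_ne hne with hlt | hlt
  · exact hs p q hlt (by omega) (by omega) hpq
  · exact hs q p hlt (by omega) (by omega) hpq.symm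

variable [Fintype A]

theorem IsCDB.window_eq_of_forall_lt {s t : List A} {k j : ℕ}
    (hs : IsCDB s (Fintype.card A ^ k) k) (ht : IsCDB t (Fintype.card A ^ k) k)
    (hj : Fintype.card A ^ k ≤ j + 1) (hjs : j + k ≤ s.length) (hjt : j + k ≤ t.length)
    (h : ∀ p, j + 1 - Fintype.card A ^ k ≤ p → p < j → window s p k = window t p k) :
    window s j k = window t j k := by
  set I := Finset.Icc (j + 1 - Fintype.card A ^ k) j
  let F : I → List.Vector A k := fun p => ⟨window s p k, length_window (by grind)⟩
  let G : I → List.Vector A k := fun p => ⟨window t p k, length_window (by grind)⟩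
  have hF : F.Injective := fun p q hpq =>
    Subtype.ext (hs.window_injOn hjs p.2 q.2 (congrArg Subtype.val hpq))
  have hG : G.Injective := fun p q hpq =>
    Subtype.ext (ht.window_injOn hjt p.2 q.2 (congrArg Subtype.val hpq))
  have hcard : Fintype.card I = Fintype.card (List.Vector A k) := by
    rw [Fintype.card_coe, Nat.card_Icc, card_vector]
    omega
  have hcard_pos : 0 < Fintype.card (List.Vector A k) :=
    Fintype.card_pos_iff.2 ⟨⟨window s j k, length_window hjs⟩⟩
  have hjI : j ∈ I := Finset.mem_Icc.2 ⟨by rw [card_vector] at hcard_pos; omega, le_rfl⟩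
  refine congrArg Subtype.val (hF.apply_eq_of_forall_ne hcard hG ⟨j, hjI⟩ fun p hp => ?_)
  have hpI := Finset.mem_Icc.1 p.2
  exact Subtype.ext (h p hpI.1 (lt_of_le_of_ne hpI.2 fun hpj => hp (Subtype.ext hpj)))

theorem IsCDB.take_succ_eq {s t : List A} {k m : ℕ} (hk : 1 ≤ k)
    (hs : IsCDB s (Fintype.card A ^ k) k) (ht : IsCDB t (Fintype.card A ^ k) k)
    (hlen : s.length = t.length) (hm : Fintype.card A ^ k + k - 1 ≤ m)
    (h : s.take m = t.take m) : s.take (m + 1) = t.take (m + 1) := by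
  rw [take_add_one, take_add_one, h]
  suffices s[m]? = t[m]? by rw [this]
  by_cases hms : m < s.length
  · obtain ⟨j, rfl⟩ : ∃ j, m = j + k - 1 := ⟨m + 1 - k, by omega⟩
    have hw : window s j k = window t j k := by
      refine hs.window_eq_of_forall_lt ht (by omega) (by omega) (by omega) fun p _ hp => ?_
      rw [← window_take s (m := j + k - 1) (by omega), h, window_take t (by omega)]
    rw [getElem?_eq_getElem hms, getElem?_eq_getElem (hlen ▸ hms),
      getElem_eq_getElem_window s hk (by omega), getElem_eq_getElem_window t hk (by omega)]
    exact congrArg some (getElem_of_eq hw _)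
  · rw [getElem?_eq_none (by omega), getElem?_eq_none (by omega)]

theorem injOn_take_setOf_isCDB {k : ℕ} (hk : 1 ≤ k) (n : ℕ) :
    Set.InjOn (take (Fintype.card A ^ k + k - 1))
      {s : List A | s.length = n ∧ IsCDB s (Fintype.card A ^ k) k} := by
  rintro s ⟨hsn, hs⟩ t ⟨htn, ht⟩ h
  have htake : ∀ m, Fintype.card A ^ k + k - 1 ≤ m → s.take m = t.take m := fun m hm =>
    Nat.le_induction h (fun m hm ih => hs.take_succ_eq hk ht (hsn.trans htn.symm) hm ih) m hm
  have hmax := htake (max (Fintype.card A ^ k + k - 1) n) (le_max_left _ _)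
  rwa [take_of_length_le (by omega), take_of_length_le (by omega)] at hmax

end

theorem stmt5_general {A : Type*} [Fintype A] (k : ℕ) (hk : 1 ≤ k) :
    Filter.Tendsto
      (fun n : ℕ =>
        Real.logb (Fintype.card A)
          (({s : List A | s.length = n ∧ IsCDB s (Fintype.card A ^ k) k}.ncard : ℝ)) / (n : ℝ))
      Filter.atTop (nhds 0) := by
  set B := Fintype.card A ^ k + k - 1
  refine Real.tendsto_logb_div_atTop_zero_of_le (C := {l : List A | l.length ≤ B}.ncard)
    (fun n => ?_) _
  refine Set.ncard_le_ncard_of_injOn (List.take B) (fun s _ => ?_)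
    (injOn_take_setOf_isCDB hk n) (List.finite_length_le A B)
  simp only [Set.mem_ofPred_eq, List.length_take]
  omega

theorem stmt5 {A : Type*} [Fintype A] (hA : 2 ≤ Fintype.card A) (k : ℕ) (hk : 1 ≤ k) :
    Filter.Tendsto
      (fun n : ℕ =>
        Real.logb (Fintype.card A)
          (({s : List A | s.length = n ∧ IsCDB s (Fintype.card A ^ k) k}.ncard : ℝ)) / (n : ℝ))
      Filter.atTop (nhds 0) :=
  stmt5_general k hk
end

section
/- Let Σ be a finite alphabet of size σ ≥ 2, let b ≥ 1, and let n ≥ b. Then the number of (b,1)-constrained de Bruijn sequences of length n over Σ is 0 if b > σ, and equals C(σ,b)·b!·(σ−b+1)^{n−b} if b ≤ σ, where C(σ,b) is the binomial coefficient. -/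
lemma window_one {A : Type*} {s : List A} {i : ℕ} (hi : i < s.length) :
    window s i 1 = [s[i]] := by
  rw [window, List.drop_eq_getElem_cons hi, List.take_one, List.head?_cons, Option.toList_some]

namespace List

variable {A : Type*}

def LocallyDistinct (s : List A) (b : ℕ) : Prop :=
  ∀ i j : ℕ, (hij : i < j) → (hj : j < s.length) → j < i + b → s[i] ≠ s[j]

lemma locallyDistinct_cons_iff {x : A} {t : List A} {b : ℕ} :
    (x :: t).LocallyDistinct b ↔ t.LocallyDistinct b ∧ x ∉ t.take (b - 1) := by
  refine ⟨fun H => ⟨fun i j hij hj hjb => ?_, fun hx => ?_⟩, fun ⟨ht, hx⟩ => ?_⟩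
  · exact H (i + 1) (j + 1) (by omega) (by simpa) (by omega)
  · obtain ⟨j, hj, rfl⟩ := mem_take_iff_getElem.1 hx
    exact H 0 (j + 1) (by omega) (by simp; omega) (by omega) rfl
  · rintro (_ | i) (_ | j) hij hj hjb
    · omega
    · exact fun h => hx (mem_take_iff_getElem.2 ⟨j, by simp at hj; omega, h.symm⟩)
    · omega
    · exact ht i j (by omega) (by simpa using hj) (by omega)

lemma LocallyDistinct.nodup_take {s : List A} {b m : ℕ} (hs : s.LocallyDistinct b)
    (hm : m ≤ b) : (s.take m).Nodup := by
  induction s generalizing m with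
  | nil => simp
  | cons x t ih =>
    obtain ⟨ht, hx⟩ := locallyDistinct_cons_iff.1 hs
    rcases m with _ | m
    · simp
    · rw [take_succ_cons, nodup_cons]
      exact ⟨fun h => hx (take_subset_take_left _ (by omega) h), ih ht (by omega)⟩

lemma Nodup.card_subtype_notMem [Fintype A] {l : List A} (hl : l.Nodup) :
    Nat.card {x : A // x ∉ l} = Fintype.card A - l.length := by
  classical
  rw [← toFinset_card_of_nodup hl, ← Finset.card_compl, ← Nat.card_eq_finsetCard]
  exact Nat.card_congr (Equiv.subtypeEquivRight fun x => by simp)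

section Counting

variable (A) [Fintype A] (b : ℕ)

def locallyDistinctConsEquiv (n : ℕ) :
    {s : List A // s.length = n + 1 ∧ s.LocallyDistinct b} ≃
      Σ t : {t : List A // t.length = n ∧ t.LocallyDistinct b}, {x : A // x ∉ t.1.take (b - 1)}
    where
  toFun
    | ⟨x :: t, hl, h⟩ =>
      ⟨⟨t, by simpa using hl, (locallyDistinct_cons_iff.1 h).1⟩, x,
        (locallyDistinct_cons_iff.1 h).2⟩
  invFun
    | ⟨⟨t, hl, ht⟩, x, hx⟩ => ⟨x :: t, by simpa, locallyDistinct_cons_iff.2 ⟨ht, hx⟩⟩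
  left_inv
    | ⟨_ :: _, _, _⟩ => rfl
  right_inv
    | ⟨⟨_, _, _⟩, _, _⟩ => rfl

theorem card_locallyDistinct_length_eq (n : ℕ) :
    Nat.card {s : List A // s.length = n ∧ s.LocallyDistinct b}
      = ∏ k ∈ Finset.range n, (Fintype.card A - min k (b - 1)) := by
  induction n with
  | zero =>
    refine Nat.card_eq_one_iff_unique.2 ⟨⟨fun ⟨s, hs, _⟩ ⟨t, ht, _⟩ => ?_⟩, ⟨[], rfl, ?_⟩⟩
    · exact Subtype.ext ((length_eq_zero_iff.1 hs).trans (length_eq_zero_iff.1 ht).symm)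
    · intro i j _ hj; simp at hj
  | succ n ih =>
    have : Fintype {t : List A // t.length = n ∧ t.LocallyDistinct b} :=
      ((finite_length_eq A n).subset fun _ ht => ht.1).fintype
    have card_fiber (t : {t : List A // t.length = n ∧ t.LocallyDistinct b}) :
        Nat.card {x : A // x ∉ t.1.take (b - 1)} = Fintype.card A - min n (b - 1) := by
      rw [(t.2.2.nodup_take (Nat.sub_le b 1)).card_subtype_notMem, length_take, t.2.1, min_comm]
    rw [Nat.card_congr (locallyDistinctConsEquiv A b n), Nat.card_sigma,
      Finset.sum_congr rfl fun t _ => card_fiber t, Finset.sum_const, smul_eq_mul,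
      Finset.card_univ, ← Nat.card_eq_fintype_card, ih, Finset.prod_range_succ]

end Counting

end List

lemma isCDB_one_iff_locallyDistinct {A : Type*} {s : List A} {b : ℕ} :
    IsCDB s b 1 ↔ s.LocallyDistinct b := by
  refine forall₂_congr fun i j => ⟨fun H hij hj hjb => ?_, fun H hij hjb hj => ?_⟩
  · simpa [window_one, hj, hij.trans hj] using H hij (by omega) (by omega)
  · have hj' : j < s.length := by omega
    rw [window_one hj', window_one (hij.trans hj'), Ne, List.singleton_inj]
    exact H hij hj' (by omega)

lemma Nat.prod_range_sub_min_eq (m b n : ℕ) (hn : b ≤ n) :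
    ∏ k ∈ Finset.range n, (m - min k (b - 1)) = m.descFactorial b * (m - (b - 1)) ^ (n - b) := by
  obtain ⟨n, rfl⟩ := Nat.exists_eq_add_of_le hn
  rw [Finset.prod_range_add, Nat.descFactorial_eq_prod_range, Nat.add_sub_cancel_left]
  congr 1
  · refine Finset.prod_congr rfl fun k hk => ?_
    rw [min_eq_left (by simp at hk; omega)]
  · simp only [show ∀ k, min (b + k) (b - 1) = b - 1 from fun k => by omega, Finset.prod_const,
      Finset.card_range]

theorem stmt6_general {A : Type*} [Fintype A] (b n : ℕ)
    (hb : 1 ≤ b) (hn : b ≤ n) :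
    {s : List A | s.length = n ∧ IsCDB s b 1}.ncard
      = if Fintype.card A < b then 0
        else (Fintype.card A).choose b * b.factorial * (Fintype.card A - b + 1) ^ (n - b) := by
  simp only [isCDB_one_iff_locallyDistinct]
  rw [← Nat.card_coe_set_eq, Set.coe_ofPred, List.card_locallyDistinct_length_eq,
    Nat.prod_range_sub_min_eq _ _ _ hn]
  split_ifs with h
  · rw [Nat.descFactorial_eq_zero_iff_lt.2 h, zero_mul]
  · rw [Nat.descFactorial_eq_factorial_mul_choose, mul_comm b.factorial]
    congr 2
    omega

theorem stmt6 {A : Type*} [Fintype A] (hA : 2 ≤ Fintype.card A) (b n : ℕ)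
    (hb : 1 ≤ b) (hn : b ≤ n) :
    {s : List A | s.length = n ∧ IsCDB s b 1}.ncard
      = if Fintype.card A < b then 0
        else (Fintype.card A).choose b * b.factorial * (Fintype.card A - b + 1) ^ (n - b) :=
  stmt6_general b n hb hn
end

section
/- Let Σ be a finite alphabet of size σ ≥ 2, and let b, k, n be positive integers with b < k. Then the number of (b,k)-constrained de Bruijn sequences of length n over Σ satisfies |C_DB(n,b,k)| ≥ σ^n · (1 − (b−1)·n·σ^{−k}). -/
/-! A sequence of length `n` fails the constraint only if two windows `s[i, i+k-1]`,
`s[j, j+k-1]` with `0 < j - i ≤ b - 1` and `j + k ≤ n` coincide. For a fixed such pair, `s` is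
then `(j - i)`-periodic on `[i, j + k)`, so deleting `s[j, j+k-1]` loses no information and at
most `σ^(n-k) = σ^n / σ^k` sequences have this coincidence. A union bound over the at most
`(b - 1) n` pairs gives the claim. -/

open Finset

section

variable {A : Type*}

lemma finite_setOf_length_eq [Finite A] (m : ℕ) : {s : List A | s.length = m}.Finite :=
  have : Finite {s : List A | s.length = m} := inferInstanceAs (Finite (List.Vector A m))
  Set.toFinite _

lemma ncard_setOf_length_eq [Fintype A] (m : ℕ) :
    {s : List A | s.length = m}.ncard = Fintype.card A ^ m := by
  rw [← Nat.card_coe_set_eq, ← card_vector, ← Nat.card_eq_fintype_card]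
  rfl

lemma getElem?_add_eq_of_window_eq {s : List A} {i j k t : ℕ}
    (hw : window s i k = window s j k) (ht : t < k) : s[i + t]? = s[j + t]? := by
  simpa [window, List.getElem?_take, ht, List.getElem?_drop] using congrArg (·[t]?) hw

lemma eq_of_window_eq_of_take_eq_of_drop_eq {s s' : List A} {i j k : ℕ} (hij : i < j)
    (hw : window s i k = window s j k) (hw' : window s' i k = window s' j k)
    (htake : s.take j = s'.take j) (hdrop : s.drop (j + k) = s'.drop (j + k)) : s = s' := by
  refine List.ext_getElem? fun m => ?_
  induction m using Nat.strong_induction_on with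
  | _ m ih =>
    rcases lt_or_ge m j with hmj | hmj
    · simpa [List.getElem?_take, hmj] using congrArg (·[m]?) htake
    rcases lt_or_ge m (j + k) with hmjk | hmjk
    -- inside the window at `j`, position `m` repeats position `m - (j - i) < m`
    · have hm : j + (m - j) = m := by omega
      rw [← hm, ← getElem?_add_eq_of_window_eq hw (by omega),
        ← getElem?_add_eq_of_window_eq hw' (by omega)]
      exact ih _ (by omega)
    · have hm : j + k + (m - (j + k)) = m := by omega
      simpa only [List.getElem?_drop, hm] using congrArg (·[m - (j + k)]?) hdrop

lemma ncard_setOf_window_eq_le [Fintype A] {n i j k : ℕ} (hij : i < j) (hjk : j + k ≤ n) :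
    {s : List A | s.length = n ∧ window s i k = window s j k}.ncard
      ≤ Fintype.card A ^ (n - k) := by
  rw [← ncard_setOf_length_eq]
  refine Set.ncard_le_ncard_of_injOn (fun s => s.take j ++ s.drop (j + k)) ?_ ?_
    (finite_setOf_length_eq _)
  · rintro s ⟨hs, -⟩
    simp only [Set.mem_ofPred_eq, List.length_append, List.length_take, List.length_drop, hs]
    omega
  · rintro s ⟨hs, hw⟩ s' ⟨hs', hw'⟩ heq
    obtain ⟨htake, hdrop⟩ := List.append_inj heq (by simp [hs, hs'])
    exact eq_of_window_eq_of_take_eq_of_drop_eq hij hw hw' htake hdrop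

def constrainedPairs (b k n : ℕ) : Finset (ℕ × ℕ) :=
  (range (n + 1) ×ˢ range (n + 1)).filter fun p => p.1 < p.2 ∧ p.2 - p.1 ≤ b - 1 ∧ p.2 + k ≤ n

lemma card_constrainedPairs_le (b k n : ℕ) : #(constrainedPairs b k n) ≤ (b - 1) * n := by
  calc #(constrainedPairs b k n) ≤ #(range (b - 1) ×ˢ range n) := by
        refine card_le_card_of_injOn (fun p => (p.2 - p.1 - 1, p.2 - 1)) ?_ ?_
        · intro p hp
          simp only [constrainedPairs, coe_filter, mem_product, mem_range,
            Set.mem_ofPred_eq] at hp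
          simp only [coe_product, coe_range, Set.mem_prod, Set.mem_Iio]
          omega
        · rintro p hp q hq hpq
          simp only [constrainedPairs, coe_filter, mem_product, mem_range,
            Set.mem_ofPred_eq] at hp hq
          simp only [Prod.mk.injEq] at hpq
          ext <;> omega
    _ = (b - 1) * n := by rw [card_product, card_range, card_range]

lemma setOf_not_isCDB_subset (b k n : ℕ) :
    {s : List A | s.length = n ∧ ¬IsCDB s b k} ⊆
      ⋃ p ∈ constrainedPairs b k n, {s | s.length = n ∧ window s p.1 k = window s p.2 k} := by
  rintro s ⟨hs, hcdb⟩
  simp only [IsCDB, not_forall, not_not] at hcdb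
  obtain ⟨i, j, hij, hd, hjk, hw⟩ := hcdb
  have hp : (i, j) ∈ constrainedPairs b k n := by
    simp only [constrainedPairs, mem_filter, mem_product, mem_range]
    omega
  exact Set.mem_biUnion hp ⟨hs, hw⟩

lemma ncard_setOf_not_isCDB_mul_pow_le [Fintype A] (b k n : ℕ) :
    {s : List A | s.length = n ∧ ¬IsCDB s b k}.ncard * Fintype.card A ^ k
      ≤ (b - 1) * n * Fintype.card A ^ n :=
  calc _ ≤ (⋃ p ∈ constrainedPairs b k n,
          {s : List A | s.length = n ∧ window s p.1 k = window s p.2 k}).ncard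
            * Fintype.card A ^ k := by
        refine Nat.mul_le_mul_right _ (Set.ncard_le_ncard (setOf_not_isCDB_subset b k n) ?_)
        exact Set.Finite.biUnion (constrainedPairs b k n).finite_toSet fun _ _ =>
          (finite_setOf_length_eq n).subset fun _ hs => hs.1
    _ ≤ ∑ p ∈ constrainedPairs b k n,
          {s : List A | s.length = n ∧ window s p.1 k = window s p.2 k}.ncard
            * Fintype.card A ^ k := by
        rw [← sum_mul]
        gcongr
        exact set_ncard_biUnion_le _ _
    _ ≤ ∑ _p ∈ constrainedPairs b k n, Fintype.card A ^ n := by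
        gcongr with p hp
        simp only [constrainedPairs, mem_filter] at hp
        rw [← pow_sub_mul_pow _ (le_of_add_le_right hp.2.2.2)]
        gcongr
        exact ncard_setOf_window_eq_le hp.2.1 hp.2.2.2
    _ ≤ (b - 1) * n * Fintype.card A ^ n := by
        rw [sum_const, smul_eq_mul]
        gcongr
        exact card_constrainedPairs_le b k n

lemma ncard_setOf_isCDB_add_ncard_setOf_not_isCDB [Fintype A] (b k n : ℕ) :
    {s : List A | s.length = n ∧ IsCDB s b k}.ncard
        + {s : List A | s.length = n ∧ ¬IsCDB s b k}.ncard = Fintype.card A ^ n := by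
  rw [← ncard_setOf_length_eq]
  exact Set.ncard_inter_add_ncard_sdiff_eq_ncard _ _ (finite_setOf_length_eq n)

end

theorem stmt7_general {A : Type*} [Fintype A] (hA : 2 ≤ Fintype.card A) (b k n : ℕ)
    (hb : 1 ≤ b) :
    (Fintype.card A : ℝ) ^ n *
        (1 - ((b : ℝ) - 1) * (n : ℝ) * (1 / (Fintype.card A : ℝ) ^ k))
      ≤ ({s : List A | s.length = n ∧ IsCDB s b k}.ncard : ℝ) := by
  set σ := Fintype.card A
  have hsplit := ncard_setOf_isCDB_add_ncard_setOf_not_isCDB (A := A) b k n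
  have hbad := ncard_setOf_not_isCDB_mul_pow_le (A := A) b k n
  set good := {s : List A | s.length = n ∧ IsCDB s b k}
  set bad := {s : List A | s.length = n ∧ ¬IsCDB s b k}
  have hσk : (0 : ℝ) < σ ^ k := pow_pos (by exact_mod_cast (by omega : 0 < σ)) k
  rify [hb] at hsplit hbad
  calc (σ : ℝ) ^ n * (1 - ((b : ℝ) - 1) * n * (1 / (σ : ℝ) ^ k))
      = σ ^ n - ((b : ℝ) - 1) * n * σ ^ n / σ ^ k := by ring
    _ ≤ σ ^ n - (bad.ncard : ℝ) := by
        gcongr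
        rwa [le_div_iff₀ hσk]
    _ = _ := by rw [← hsplit]; ring

theorem stmt7 {A : Type*} [Fintype A] (hA : 2 ≤ Fintype.card A) (b k n : ℕ)
    (hb : 1 ≤ b) (hbk : b < k) (hn : 1 ≤ n) :
    (Fintype.card A : ℝ) ^ n *
        (1 - ((b : ℝ) - 1) * (n : ℝ) * (1 / (Fintype.card A : ℝ) ^ k))
      ≤ ({s : List A | s.length = n ∧ IsCDB s b k}.ncard : ℝ) :=
  stmt7_general hA b k n hb
end

section
/- Let Σ be a finite alphabet of size σ ≥ 2, and let b, k, n be positive integers with 2 ≤ b < k. If k ≥ ⌈log_σ n + log_σ(b−1)⌉ + 1, then |C_DB(n,b,k)| ≥ (σ−1)·σ^{n−1}; in particular the redundancy n − log_σ |C_DB(n,b,k)| is at most one symbol. -/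
open Finset

section Windows

variable {A : Type*}

lemma isCDB_of_length_le {s : List A} {b k : ℕ} (h : s.length ≤ k) : IsCDB s b k := by
  intro i j hij _ hj
  omega

lemma getElem_eq_of_window_eq {s : List A} {i j k t : ℕ} (hi : i + k ≤ s.length)
    (hj : j + k ≤ s.length) (h : window s i k = window s j k) (ht : t < k) :
    s[i + t] = s[j + t] := by
  have := List.getElem_of_eq h (i := t) (by simp [window]; omega)
  simpa [window] using this

lemma eq_of_window_eq_of_take_drop_eq {s t : List A} {i j k : ℕ} (hst : s.length = t.length)
    (hij : i < j) (hjk : j + k ≤ s.length)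
    (hs : window s i k = window s j k) (ht : window t i k = window t j k)
    (htake : s.take j = t.take j) (hdrop : s.drop (j + k) = t.drop (j + k)) : s = t := by
  refine List.ext_getElem hst fun m => ?_
  induction m using Nat.strong_induction_on with
  | _ m ih =>
    intro hm hm'
    rcases lt_or_ge m j with hmj | hmj
    · have := List.getElem_of_eq htake (i := m) (by simp; omega)
      rwa [List.getElem_take, List.getElem_take] at this
    rcases lt_or_ge m (j + k) with hmk | hmk
    · -- inside the second window, entries are copied from `j - i` positions earlier
      obtain ⟨d, rfl⟩ := Nat.exists_eq_add_of_le hmj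
      rw [← getElem_eq_of_window_eq (by omega) (by omega) hs (by omega : d < k),
        ← getElem_eq_of_window_eq (by omega) (by omega) ht (by omega : d < k)]
      exact ih (i + d) (by omega) (by omega) (by omega)
    · obtain ⟨d, rfl⟩ := Nat.exists_eq_add_of_le hmk
      have := List.getElem_of_eq hdrop (i := d) (by simp; omega)
      rwa [List.getElem_drop, List.getElem_drop] at this

end Windows

section Counting

variable {A : Type*} [Fintype A]

lemma card_filter_window_eq_le [DecidableEq A] {n i j k : ℕ} (hij : i < j) (hjk : j + k ≤ n) :
    #{v : List.Vector A n | window v.toList i k = window v.toList j k}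
      ≤ Fintype.card A ^ (n - k) := by
  let cut : List.Vector A n → List.Vector A (n - k) :=
    fun v => ⟨v.toList.take j ++ v.toList.drop (j + k), by simp; omega⟩
  calc _ ≤ #(univ : Finset (List.Vector A (n - k))) := by
        refine card_le_card_of_injOn cut (fun _ _ => mem_coe.2 (mem_univ _)) ?_
        intro v hv w hw hvw
        simp only [coe_filter, mem_univ, true_and, Set.mem_ofPred_eq] at hv hw
        obtain ⟨htake, hdrop⟩ := List.append_inj (congrArg Subtype.val hvw) (by simp)
        exact List.Vector.toList_injective <| eq_of_window_eq_of_take_drop_eq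
          (by simp) hij (by simpa) hv hw htake hdrop
    _ = Fintype.card A ^ (n - k) := by rw [card_univ, card_vector]

open Classical in
lemma card_filter_not_isCDB_le (n b k : ℕ) :
    #{v : List.Vector A n | ¬ IsCDB v.toList b k} ≤ n * (b - 1) * Fintype.card A ^ (n - k) := by
  let pairs := (range n ×ˢ Icc 1 (b - 1)).filter fun q => q.1 + q.2 + k ≤ n
  have hpairs : #pairs ≤ n * (b - 1) := by
    simpa using card_filter_le (range n ×ˢ Icc 1 (b - 1)) _
  have hcover : univ.filter (fun v : List.Vector A n => ¬ IsCDB v.toList b k) ⊆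
      pairs.biUnion fun q =>
        {v : List.Vector A n | window v.toList q.1 k = window v.toList (q.1 + q.2) k} := by
    intro v hv
    simp only [IsCDB, mem_filter, mem_univ, true_and, List.Vector.toList_length] at hv
    push Not at hv
    obtain ⟨i, j, hij, hdist, hlen, heq⟩ := hv
    refine mem_biUnion.2 ⟨(i, j - i), ?_, ?_⟩
    · simp only [pairs, mem_filter, mem_product, mem_range, mem_Icc]
      omega
    · simpa [Nat.add_sub_cancel' hij.le] using heq
  calc _ ≤ ∑ q ∈ pairs, #{v : List.Vector A n |
          window v.toList q.1 k = window v.toList (q.1 + q.2) k} :=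
        (card_le_card hcover).trans card_biUnion_le
    _ ≤ ∑ _q ∈ pairs, Fintype.card A ^ (n - k) := by
        refine sum_le_sum fun q hq => ?_
        simp only [pairs, mem_filter, mem_product, mem_Icc] at hq
        exact card_filter_window_eq_le (by omega) hq.2
    _ ≤ n * (b - 1) * Fintype.card A ^ (n - k) := by
        rw [sum_const, smul_eq_mul]
        exact Nat.mul_le_mul_right _ hpairs

open Classical in
lemma card_filter_isCDB_ge {n b k : ℕ} (hn : 1 ≤ n) (hk : 1 ≤ k)
    (hnb : n * (b - 1) ≤ Fintype.card A ^ (k - 1)) :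
    (Fintype.card A - 1) * Fintype.card A ^ (n - 1)
      ≤ #{v : List.Vector A n | IsCDB v.toList b k} := by
  set σ := Fintype.card A
  have hbad : #{v : List.Vector A n | ¬ IsCDB v.toList b k} ≤ σ ^ (n - 1) := by
    rcases le_or_gt n k with hnk | hkn
    · simp [isCDB_of_length_le, hnk]
    calc _ ≤ n * (b - 1) * σ ^ (n - k) := card_filter_not_isCDB_le n b k
      _ ≤ σ ^ (k - 1) * σ ^ (n - k) := Nat.mul_le_mul_right _ hnb
      _ = σ ^ (n - 1) := by rw [← pow_add]; congr 1; omega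
  have htotal : #{v : List.Vector A n | IsCDB v.toList b k}
      + #{v : List.Vector A n | ¬ IsCDB v.toList b k} = σ * σ ^ (n - 1) := by
    rw [card_filter_add_card_filter_not, card_univ, card_vector, ← pow_succ',
      Nat.sub_add_cancel hn]
  rw [Nat.sub_one_mul]
  omega

lemma ncard_setOf_length_eq_and (P : List A → Prop) [DecidablePred P] (n : ℕ) :
    {s : List A | s.length = n ∧ P s}.ncard = #{v : List.Vector A n | P v.toList} := by
  rw [← Set.ncard_coe_finset, coe_filter, ← Set.ncard_image_of_injective _
    List.Vector.toList_injective]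
  congr 1
  ext s
  constructor
  · rintro ⟨hs, hP⟩
    exact ⟨⟨s, hs⟩, ⟨mem_univ _, hP⟩, rfl⟩
  · rintro ⟨v, hv, rfl⟩
    exact ⟨v.toList_length, hv.2⟩

end Counting

lemma le_pow_of_ceil_logb_le {c m e : ℕ} (hc : 1 < c) (h : ⌈Real.logb c m⌉ ≤ e) :
    m ≤ c ^ e := by
  rcases Nat.eq_zero_or_pos m with rfl | hm
  · exact Nat.zero_le _
  rw [Int.ceil_le, Real.logb_le_iff_le_rpow (by exact_mod_cast hc) (by exact_mod_cast hm)] at h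
  exact_mod_cast (Real.rpow_natCast (c : ℝ) e) ▸ h

lemma sub_logb_le_of_pow_le {c x : ℝ} {n : ℕ} (hc : 1 < c) (hn : 1 ≤ n)
    (hx : c ^ (n - 1) ≤ x) :
    n - Real.logb c x ≤ 1 := by
  have := (Real.le_logb_iff_rpow_le hc ((pow_pos (by linarith) _).trans_le hx)).2
    (by rwa [Real.rpow_natCast])
  push_cast [hn] at this
  linarith

theorem stmt8 {A : Type*} [Fintype A] (hA : 2 ≤ Fintype.card A) (b k n : ℕ)
    (hb : 2 ≤ b) (hbk : b < k) (hn : 1 ≤ n)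
    (hkceil :
      ⌈Real.logb (Fintype.card A) (n : ℝ) + Real.logb (Fintype.card A) ((b : ℝ) - 1)⌉ + 1
        ≤ (k : ℤ)) :
    (((Fintype.card A - 1) * Fintype.card A ^ (n - 1) : ℕ) : ℕ)
        ≤ {s : List A | s.length = n ∧ IsCDB s b k}.ncard
    ∧ (n : ℝ) - Real.logb (Fintype.card A)
        (({s : List A | s.length = n ∧ IsCDB s b k}.ncard : ℝ)) ≤ 1 := by
  classical
  have hσ : 1 < Fintype.card A := hA
  have hnb : n * (b - 1) ≤ Fintype.card A ^ (k - 1) := by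
    refine le_pow_of_ceil_logb_le hσ ?_
    have hb' : (1 : ℝ) ≤ b - 1 := by
      have : (2 : ℝ) ≤ b := by exact_mod_cast hb
      linarith
    rw [Nat.cast_mul, Nat.cast_pred (by omega),
      Real.logb_mul (by positivity) (by linarith)]
    omega
  have hcard : (Fintype.card A - 1) * Fintype.card A ^ (n - 1)
      ≤ {s : List A | s.length = n ∧ IsCDB s b k}.ncard := by
    rw [ncard_setOf_length_eq_and]
    exact card_filter_isCDB_ge hn (by omega) hnb
  refine ⟨hcard, sub_logb_le_of_pow_le (by exact_mod_cast hσ) hn ?_⟩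
  exact_mod_cast (Nat.le_mul_of_pos_left _ (by omega)).trans hcard
end

section
/- Let k ≥ 2 and work over the binary alphabet {0,1}. Let F_1 = {0^{k+1}, 1^{k+1}, (0101…)_{k+2}, (1010…)_{k+2}} (the two constant words of length k+1 and the two alternating words of length k+2) and let F_2 = {0^k, 1^{k+1}}. Define D : {0,1}^n → {0,1}^{n−1} by D(x_1,…,x_n) = (y_2,…,y_n) with y_i = x_i + x_{i−1} (mod 2). Then D is a 2-to-1 map; x ∈ A(n;F_1) if and only if D(x) ∈ A(n−1;F_2); and consequently |A(n;F_1)| = 2·|A(n−1;F_2)| for all n ≥ 2. -/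
/-- The derivative map `D(x_1,…,x_n) = (x_1+x_2, …, x_{n-1}+x_n)` over `F_2`. -/
def Dmap (x : List (ZMod 2)) : List (ZMod 2) :=
  List.zipWith (· + ·) x.tail x

/-- The alternating word of length `m` starting with `0`: `0101…`. -/
def alt0 (m : ℕ) : List (ZMod 2) := (List.range m).map (fun i => (i : ZMod 2))

/-- The alternating word of length `m` starting with `1`: `1010…`. -/
def alt1 (m : ℕ) : List (ZMod 2) := (List.range m).map (fun i => ((i + 1 : ℕ) : ZMod 2))

/-- `F_1`: the two constant words of length `k+1` and the two alternating words of
length `k+2`. -/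
def F1 (k : ℕ) : Set (List (ZMod 2)) :=
  {List.replicate (k + 1) (0 : ZMod 2), List.replicate (k + 1) (1 : ZMod 2),
    alt0 (k + 2), alt1 (k + 2)}

/-- `F_2 = {0^k, 1^{k+1}}`. -/
def F2 (k : ℕ) : Set (List (ZMod 2)) :=
  {List.replicate k (0 : ZMod 2), List.replicate (k + 1) (1 : ZMod 2)}

/-! `Dmap` is differentiation mod 2 and the partial sums `y.scanl (· + ·) b` integrate it back,
so a nonempty word is determined by its first letter and its derivative. Factors of `x` map onto
the factors of `Dmap x`, and the nonempty words whose derivative lies in `F2 k` are exactly those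
of `F1 k`: derivative `0^k` means constant of length `k + 1`, derivative `1^(k+1)` means
alternating of length `k + 2`. Hence `x` avoids `F1 k` iff `Dmap x` avoids `F2 k`, and
`(b, y) ↦ y.scanl (· + ·) b` is a bijection from `ZMod 2 × A(n-1; F2 k)` onto `A(n; F1 k)`. -/

lemma List.scanl_add_replicate {M : Type*} [AddMonoid M] (b c : M) (m : ℕ) :
    (List.replicate m c).scanl (· + ·) b = (List.range (m + 1)).map (fun i => b + i • c) := by
  induction m generalizing b with
  | zero => simp
  | succ m ih =>
    rw [List.replicate_succ, List.scanl_cons, ih, List.range_succ_eq_map (n := m + 1),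
      List.map_cons, List.map_map]
    simp only [zero_nsmul, add_zero, Function.comp_def, succ_nsmul', add_assoc]

lemma Dmap_cons_cons (a b : ZMod 2) (t : List (ZMod 2)) :
    Dmap (a :: b :: t) = (b + a) :: Dmap (b :: t) := rfl

lemma length_Dmap (x : List (ZMod 2)) : (Dmap x).length = x.length - 1 := by
  simp [Dmap]

lemma Dmap_drop (x : List (ZMod 2)) (i : ℕ) : Dmap (x.drop i) = (Dmap x).drop i := by
  simp [Dmap, List.drop_zipWith]

lemma Dmap_take (x : List (ZMod 2)) (m : ℕ) : Dmap (x.take (m + 1)) = (Dmap x).take m := by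
  induction x generalizing m with
  | nil => simp [Dmap]
  | cons a t ih =>
    cases m with
    | zero => cases t <;> rfl
    | succ m =>
      cases t with
      | nil => rfl
      | cons b t => simp only [List.take_succ_cons, Dmap_cons_cons, ← ih]

lemma Dmap_scanl (b : ZMod 2) (y : List (ZMod 2)) : Dmap (y.scanl (· + ·) b) = y := by
  induction y generalizing b with
  | nil => rfl
  | cons c y ih =>
    obtain ⟨t, ht⟩ : ∃ t, y.scanl (· + ·) (b + c) = (b + c) :: t := by
      cases y
      exacts [⟨[], List.scanl_nil⟩, ⟨_, List.scanl_cons⟩]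
    rw [List.scanl_cons, ht, Dmap_cons_cons, ← ht, ih, add_comm b c, CharTwo.add_cancel_right]

lemma scanl_head_Dmap (x : List (ZMod 2)) (hx : x ≠ []) :
    (Dmap x).scanl (· + ·) (x.head hx) = x := by
  induction x with
  | nil => exact absurd rfl hx
  | cons a t ih =>
    cases t with
    | nil => rfl
    | cons b t =>
      rw [Dmap_cons_cons, List.scanl_cons, List.head_cons, add_comm b a, CharTwo.add_cancel_left]
      exact congrArg (a :: ·) (ih (List.cons_ne_nil _ _))

lemma Dmap_isInfix {u x : List (ZMod 2)} (h : u <:+: x) : Dmap u <:+: Dmap x := by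
  obtain ⟨t, hut, htx⟩ := List.infix_iff_prefix_suffix.1 h
  rw [List.prefix_iff_eq_take] at hut
  rw [List.suffix_iff_eq_drop] at htx
  refine List.infix_iff_prefix_suffix.2
    ⟨Dmap t, ?_, htx ▸ Dmap_drop x _ ▸ List.drop_suffix _ _⟩
  rcases Nat.eq_zero_or_eq_succ_pred u.length with h0 | hs
  · simp [List.length_eq_zero_iff.1 h0, Dmap]
  · rw [hut, hs, Dmap_take]
    exact List.take_prefix _ _

lemma exists_isInfix_Dmap_eq {v x : List (ZMod 2)} (hx : x ≠ []) (h : v <:+: Dmap x) :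
    ∃ u, u <:+: x ∧ u ≠ [] ∧ Dmap u = v := by
  obtain ⟨t, hvt, htx⟩ := List.infix_iff_prefix_suffix.1 h
  rw [List.prefix_iff_eq_take] at hvt
  rw [List.suffix_iff_eq_drop, ← Dmap_drop] at htx
  set w := x.drop ((Dmap x).length - t.length)
  have hw : w ≠ [] := by
    have := List.length_pos_iff.2 hx
    rw [ne_eq, List.drop_eq_nil_iff, length_Dmap]
    omega
  refine ⟨w.take (v.length + 1),
    (List.take_prefix _ _).isInfix.trans (List.drop_suffix _ _).isInfix,
    by simpa using hw, by rw [Dmap_take, ← htx, ← hvt]⟩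

lemma scanl_replicate_zero (b : ZMod 2) (m : ℕ) :
    (List.replicate m 0).scanl (· + ·) b = List.replicate (m + 1) b := by
  simp [List.scanl_add_replicate, List.map_const']

lemma scanl_replicate_one_zero (m : ℕ) :
    (List.replicate m 1).scanl (· + ·) (0 : ZMod 2) = alt0 (m + 1) := by
  simp [List.scanl_add_replicate, alt0, List.map_eq_flatMap]

lemma scanl_replicate_one_one (m : ℕ) :
    (List.replicate m 1).scanl (· + ·) (1 : ZMod 2) = alt1 (m + 1) := by
  rw [List.scanl_add_replicate, alt1]
  simp only [nsmul_one, Nat.cast_succ, add_comm]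

lemma mem_F1_iff {k : ℕ} {u : List (ZMod 2)} : u ∈ F1 k ↔ u ≠ [] ∧ Dmap u ∈ F2 k := by
  constructor
  · rintro (rfl | rfl | rfl | rfl)
    · simp [← scanl_replicate_zero, Dmap_scanl, F2]
    · simp [← scanl_replicate_zero, Dmap_scanl, F2]
    · simp [← scanl_replicate_one_zero, Dmap_scanl, F2]
    · simp [← scanl_replicate_one_one, Dmap_scanl, F2]
  · rintro ⟨hu, hD⟩
    rw [← scanl_head_Dmap u hu]
    generalize u.head hu = b
    obtain rfl | rfl : b = 0 ∨ b = 1 := by revert b; decide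
    all_goals
      rcases (by simpa [F2] using hD : _ ∨ _) with hD | hD <;>
      simp [hD, F1, scanl_replicate_zero, scanl_replicate_one_zero, scanl_replicate_one_one]

lemma avoids_F1_iff {k : ℕ} {x : List (ZMod 2)} (hx : x ≠ []) :
    Avoids x (F1 k) ↔ Avoids (Dmap x) (F2 k) := by
  constructor
  · intro h t ht hinf
    obtain ⟨u, hux, hu, rfl⟩ := exists_isInfix_Dmap_eq hx hinf
    exact h u (mem_F1_iff.2 ⟨hu, ht⟩) hux
  · intro h t ht hinf
    exact h _ (mem_F1_iff.1 ht).2 (Dmap_isInfix hinf)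

lemma scanl_add_injective :
    Function.Injective fun p : ZMod 2 × List (ZMod 2) => p.2.scanl (· + ·) p.1 := by
  rintro ⟨b, y⟩ ⟨b', y'⟩ h
  refine Prod.ext ?_ ?_
  · simpa using congrArg List.head? h
  · simpa [Dmap_scanl] using congrArg Dmap h

lemma ncard_length_eq_two_mul {P Q : List (ZMod 2) → Prop}
    (hPQ : ∀ x, x ≠ [] → (P x ↔ Q (Dmap x))) {n : ℕ} (hn : n ≠ 0) :
    {x | x.length = n ∧ P x}.ncard = 2 * {y | y.length = n - 1 ∧ Q y}.ncard := by
  have himage : {x | x.length = n ∧ P x} =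
      (fun p : ZMod 2 × List (ZMod 2) => p.2.scanl (· + ·) p.1) ''
        (Set.univ ×ˢ {y | y.length = n - 1 ∧ Q y}) := by
    ext x
    simp only [Set.mem_ofPred_eq, Set.mem_image, Set.mem_prod, Set.mem_univ, true_and, Prod.exists]
    constructor
    · rintro ⟨hlen, hP⟩
      have hx : x ≠ [] := by rintro rfl; exact hn hlen.symm
      exact ⟨x.head hx, Dmap x, ⟨by rw [length_Dmap, hlen], (hPQ x hx).1 hP⟩,
        scanl_head_Dmap x hx⟩
    · rintro ⟨b, y, ⟨hlen, hQ⟩, rfl⟩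
      refine ⟨by rw [List.length_scanl, hlen]; omega, ?_⟩
      rwa [hPQ _ List.scanl_ne_nil, Dmap_scanl]
  rw [himage, Set.ncard_image_of_injective _ scanl_add_injective, Set.ncard_prod, Set.ncard_univ,
    Nat.card_zmod]

theorem stmt9_general (k : ℕ) (n : ℕ) (hn : 2 ≤ n) :
    (∀ y : List (ZMod 2), y.length = n - 1 →
        {x : List (ZMod 2) | x.length = n ∧ Dmap x = y}.ncard = 2)
    ∧ (∀ x : List (ZMod 2), x.length = n →
        (Avoids x (F1 k) ↔ Avoids (Dmap x) (F2 k)))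
    ∧ {x : List (ZMod 2) | x.length = n ∧ Avoids x (F1 k)}.ncard
        = 2 * {y : List (ZMod 2) | y.length = n - 1 ∧ Avoids y (F2 k)}.ncard := by
  have hn0 : n ≠ 0 := by omega
  refine ⟨fun y hy => ?_, fun x hx => avoids_F1_iff ?_,
    ncard_length_eq_two_mul (fun x hx => avoids_F1_iff hx) hn0⟩
  · rw [ncard_length_eq_two_mul (Q := (· = y)) (fun _ _ => Iff.rfl) hn0]
    have hfiber : {z : List (ZMod 2) | z.length = n - 1 ∧ z = y} = {y} :=
      Set.ext fun z => ⟨And.right, fun hz => ⟨hz ▸ hy, hz⟩⟩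
    rw [hfiber, Set.ncard_singleton]
  · rintro rfl
    exact hn0 hx.symm

theorem stmt9 (k : ℕ) (hk : 2 ≤ k) (n : ℕ) (hn : 2 ≤ n) :
    (∀ y : List (ZMod 2), y.length = n - 1 →
        {x : List (ZMod 2) | x.length = n ∧ Dmap x = y}.ncard = 2)
    ∧ (∀ x : List (ZMod 2), x.length = n →
        (Avoids x (F1 k) ↔ Avoids (Dmap x) (F2 k)))
    ∧ {x : List (ZMod 2) | x.length = n ∧ Avoids x (F1 k)}.ncard
        = 2 * {y : List (ZMod 2) | y.length = n - 1 ∧ Avoids y (F2 k)}.ncard :=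
  stmt9_general k n hn
end

section
/- Let k ≥ 2 and let F_2 = {0^k, 1^{k+1}} over the binary alphabet. Let A_0(n;F_2) (respectively A_1(n;F_2)) be the set of binary words of length n that avoid F_2 and start with 0 (respectively with 1). Then for all n ≥ k, |A_0(n;F_2)| = Σ_{i=1}^{k−1} |A_1(n−i;F_2)|. -/
namespace List

variable {α : Type*} {a : α}

theorem exists_eq_replicate_append_of_head?_ne (a : α) :
    ∀ s : List α, ∃ i t, s = replicate i a ++ t ∧ t.head? ≠ some a
  | [] => ⟨0, [], rfl, by simp⟩
  | b :: s => by
    by_cases hb : b = a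
    · obtain ⟨i, t, rfl, ht⟩ := exists_eq_replicate_append_of_head?_ne a s
      exact ⟨i + 1, t, by rw [hb, replicate_succ, cons_append], ht⟩
    · exact ⟨0, b :: s, rfl, by simpa using hb⟩

theorem eq_of_replicate_append_eq {i j : ℕ} {t t' : List α} (ht : t.head? ≠ some a)
    (ht' : t'.head? ≠ some a) (h : replicate i a ++ t = replicate j a ++ t') : i = j := by
  induction i generalizing j with
  | zero => cases j with
    | zero => rfl
    | succ j => rw [replicate_zero, nil_append] at h; simp [h, replicate_succ] at ht
  | succ i ih => cases j with
    | zero => rw [replicate_zero, nil_append] at h; simp [← h, replicate_succ] at ht'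
    | succ j =>
      simp only [replicate_succ, cons_append, cons.injEq, true_and] at h
      exact congrArg (· + 1) (ih h)

theorem pairwiseDisjoint_image_replicate_append {S : ℕ → Set (List α)}
    (hS : ∀ i, ∀ t ∈ S i, t.head? ≠ some a) (I : Set ℕ) :
    I.PairwiseDisjoint fun i => (replicate i a ++ ·) '' S i := by
  intro i _ j _ hij
  rw [Function.onFun, Set.disjoint_left]
  rintro _ ⟨t, ht, rfl⟩ ⟨t', ht', h⟩
  exact hij (eq_of_replicate_append_eq (hS i t ht) (hS j t' ht') h.symm)

end List

open List

theorem Avoids.of_infix {α : Type*} {s t : List α} {F : Set (List α)} (h : Avoids s F)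
    (ht : t <:+: s) : Avoids t F :=
  fun p hp hps => h p hp (hps.trans ht)

theorem avoids_F2_replicate_zero_append_iff {k i : ℕ} {t : List (ZMod 2)} (hi : i < k)
    (ht : t.head? = some 1) :
    Avoids (replicate i 0 ++ t) (F2 k) ↔ Avoids t (F2 k) := by
  refine ⟨fun h => h.of_infix (suffix_append _ _).isInfix, fun h => ?_⟩
  obtain ⟨t, rfl⟩ := head?_eq_some_iff.mp ht
  induction i with
  | zero => simpa using h
  | succ i ih =>
    intro p hp hinf
    rw [replicate_succ, cons_append, infix_cons_iff] at hinf
    rcases hinf with hpre | hinf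
    · rcases hp with rfl | rfl
      · obtain ⟨m, rfl⟩ : ∃ m, k = (i + 1) + (m + 1) := ⟨k - (i + 2), by omega⟩
        rw [replicate_add, ← cons_append, ← replicate_succ, prefix_append_right_inj,
          replicate_succ, cons_prefix_cons] at hpre
        exact absurd hpre.1 (by decide)
      · rw [replicate_succ, cons_prefix_cons] at hpre
        exact absurd hpre.1 (by decide)
    · exact ih (by omega) p hp hinf

/-- The paper's `A_a(n; F_2)`. -/
def F2Avoiders (k n : ℕ) (a : ZMod 2) : Set (List (ZMod 2)) :=
  {s | s.length = n ∧ Avoids s (F2 k) ∧ s.head? = some a}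

theorem F2Avoiders_finite (k n : ℕ) (a : ZMod 2) : (F2Avoiders k n a).Finite :=
  (List.finite_length_eq (ZMod 2) n).subset fun _ hs => hs.1

theorem F2Avoiders_zero_eq_biUnion {k n : ℕ} (hn : k ≤ n) :
    F2Avoiders k n 0 =
      ⋃ i ∈ (Finset.Icc 1 (k - 1) : Set ℕ), (replicate i 0 ++ ·) '' F2Avoiders k (n - i) 1 := by
  ext s
  simp only [Set.mem_iUnion, Set.mem_image, Finset.coe_Icc, Set.mem_Icc, exists_prop]
  constructor
  · rintro ⟨hlen, hav, hhead⟩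
    obtain ⟨i, t, rfl, ht⟩ := exists_eq_replicate_append_of_head?_ne 0 s
    have hi0 : i ≠ 0 := by rintro rfl; exact ht (by simpa using hhead)
    have hik : i < k := by
      by_contra! hki
      obtain ⟨m, rfl⟩ : ∃ m, i = k + m := ⟨i - k, by omega⟩
      refine hav _ (Or.inl rfl) ?_
      rw [replicate_add, append_assoc]
      exact (prefix_append _ _).isInfix
    obtain ⟨c, t, rfl⟩ : ∃ c t', t = c :: t' := by
      cases t with
      | nil => simp at hlen; omega
      | cons c t => exact ⟨c, t, rfl⟩
    have hc : c = 1 := by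
      fin_cases c
      · exact absurd rfl ht
      · rfl
    simp only [length_append] at hlen
    refine ⟨i, ⟨by omega, by omega⟩, c :: t,
      ⟨?_, hav.of_infix (suffix_append _ _).isInfix, ?_⟩, rfl⟩
    · rw [length_replicate] at hlen
      omega
    · simp [hc]
  · rintro ⟨i, ⟨hi1, hik⟩, t, ⟨htlen, htav, hthead⟩, rfl⟩
    refine ⟨by simp; omega, (avoids_F2_replicate_zero_append_iff (by omega) hthead).mpr htav, ?_⟩
    obtain ⟨i, rfl⟩ : ∃ j, i = j + 1 := ⟨i - 1, by omega⟩
    simp [replicate_succ]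

theorem stmt10_general (k n : ℕ) (hn : k ≤ n) :
    {s : List (ZMod 2) | s.length = n ∧ Avoids s (F2 k) ∧ s.head? = some 0}.ncard
      = ∑ i ∈ Finset.Icc 1 (k - 1),
          {s : List (ZMod 2) | s.length = n - i ∧ Avoids s (F2 k) ∧ s.head? = some 1}.ncard := by
  change (F2Avoiders k n 0).ncard = ∑ i ∈ Finset.Icc 1 (k - 1), (F2Avoiders k (n - i) 1).ncard
  rw [F2Avoiders_zero_eq_biUnion hn, Set.Finite.ncard_biUnion (Finset.finite_toSet _)
    (fun i _ => (F2Avoiders_finite k (n - i) 1).image _)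
    (pairwiseDisjoint_image_replicate_append (fun i t ht => by rw [ht.2.2]; decide) _),
    finsum_mem_coe_finset]
  exact Finset.sum_congr rfl fun i _ => Set.ncard_image_of_injective _ (append_right_injective _)

theorem stmt10 (k n : ℕ) (hk : 2 ≤ k) (hn : k ≤ n) :
    {s : List (ZMod 2) | s.length = n ∧ Avoids s (F2 k) ∧ s.head? = some 0}.ncard
      = ∑ i ∈ Finset.Icc 1 (k - 1),
          {s : List (ZMod 2) | s.length = n - i ∧ Avoids s (F2 k) ∧ s.head? = some 1}.ncard :=
  stmt10_general k n hn
end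

section
/- Let Σ be a finite alphabet, let b ≥ 2, and let s ∈ Σ^n be a (b,1)-constrained de Bruijn sequence. For Δ ⊆ {1,…,n}, let s(Δ) denote the word obtained from s by deleting the symbols in the positions of Δ (keeping the remaining symbols in order). Suppose Δ_1, Δ_2 ⊆ {1,…,n} each contain at most b−1 consecutive integers (i.e., neither contains a run {j, j+1, …, j+b−1} of b consecutive positions). If s(Δ_1) = s(Δ_2), then Δ_1 = Δ_2. -/
/-- The word obtained from `s` by deleting the symbols at the (0-based) positions
in `Δ`, keeping the remaining symbols in order. -/
def erasePos {A : Type*} (s : List A) (Δ : Finset ℕ) : List A :=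
  ((List.range s.length).filter (fun i => i ∉ Δ)).filterMap (fun i => s[i]?)

section ErasedRange

variable {A : Type*} (s : List A)

def erasedRange (Δ : Finset ℕ) (a n : ℕ) : List A :=
  ((List.range' a n).filter (fun i => i ∉ Δ)).filterMap (fun i => s[i]?)

theorem erasePos_eq_erasedRange (Δ : Finset ℕ) : erasePos s Δ = erasedRange s Δ 0 s.length := by
  rw [erasePos, erasedRange, List.range_eq_range']

theorem erasedRange_add (Δ : Finset ℕ) (a n₁ n₂ : ℕ) :
    erasedRange s Δ a (n₁ + n₂) = erasedRange s Δ a n₁ ++ erasedRange s Δ (a + n₁) n₂ := by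
  rw [erasedRange, erasedRange, erasedRange, ← List.range'_append_1, List.filter_append,
    List.filterMap_append]

theorem erasedRange_congr {Δ₁ Δ₂ : Finset ℕ} {a n : ℕ}
    (h : ∀ i, a ≤ i → i < a + n → (i ∈ Δ₁ ↔ i ∈ Δ₂)) :
    erasedRange s Δ₁ a n = erasedRange s Δ₂ a n := by
  rw [erasedRange, erasedRange, List.filter_congr]
  intro i hi
  rw [List.mem_range'_1] at hi
  simp [h i hi.1 hi.2]

theorem erasedRange_succ_of_mem {Δ : Finset ℕ} {a : ℕ} (n : ℕ) (ha : a ∈ Δ) :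
    erasedRange s Δ a (n + 1) = erasedRange s Δ (a + 1) n := by
  simp [erasedRange, List.range'_succ, ha]

theorem erasedRange_succ_of_notMem {Δ : Finset ℕ} {a : ℕ} (n : ℕ) (ha : a ∉ Δ)
    (hlen : a < s.length) :
    erasedRange s Δ a (n + 1) = s[a] :: erasedRange s Δ (a + 1) n := by
  simp [erasedRange, List.range'_succ, ha, List.getElem?_eq_getElem hlen]

theorem exists_first_kept_of_erasedRange_eq_cons {Δ : Finset ℕ} {x : A} {l : List A} :
    ∀ {a n : ℕ}, a + n ≤ s.length → erasedRange s Δ a n = x :: l →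
      ∃ j, a ≤ j ∧ j ∉ Δ ∧ (∀ i, a ≤ i → i < j → i ∈ Δ) ∧ ∃ hj : j < s.length, s[j] = x
  | a, 0, _, h => by simp [erasedRange] at h
  | a, n + 1, hlen, h => by
    by_cases ha : a ∈ Δ
    · rw [erasedRange_succ_of_mem s n ha] at h
      obtain ⟨j, haj, hj, hbefore, hjx⟩ :=
        exists_first_kept_of_erasedRange_eq_cons (by omega) h
      refine ⟨j, by omega, hj, fun i hai hij => ?_, hjx⟩
      rcases hai.eq_or_lt with rfl | hai
      · exact ha
      · exact hbefore i hai hij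
    · rw [erasedRange_succ_of_notMem s n ha (by omega), List.cons.injEq] at h
      exact ⟨a, le_rfl, ha, fun i hai hia => absurd hai (not_le.2 hia), by omega, h.1⟩

end ErasedRange

theorem erasedRange_eq_of_erasePos_eq {A : Type*} {s : List A} {Δ₁ Δ₂ : Finset ℕ} {m : ℕ}
    (heq : erasePos s Δ₁ = erasePos s Δ₂) (hm : m ≤ s.length)
    (hagree : ∀ i < m, (i ∈ Δ₁ ↔ i ∈ Δ₂)) :
    erasedRange s Δ₁ m (s.length - m) = erasedRange s Δ₂ m (s.length - m) := by
  have hsplit (Δ : Finset ℕ) :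
      erasePos s Δ = erasedRange s Δ 0 m ++ erasedRange s Δ m (s.length - m) := by
    have := erasedRange_add s Δ 0 m (s.length - m)
    rwa [Nat.zero_add, Nat.add_sub_cancel' hm, ← erasePos_eq_erasedRange] at this
  rw [hsplit, hsplit, erasedRange_congr s (fun i _ hi => hagree i (by omega))] at heq
  exact List.append_cancel_left heq

theorem erasePos_ne_of_first_diff {A : Type*} {b : ℕ} {s : List A} (hs : IsCDB s b 1)
    {Δ₁ Δ₂ : Finset ℕ} (hr1 : ¬ ∃ j : ℕ, ∀ t : ℕ, t < b → j + t ∈ Δ₁)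
    {m : ℕ} (hm : m < s.length) (hm1 : m ∈ Δ₁) (hm2 : m ∉ Δ₂)
    (hagree : ∀ i < m, (i ∈ Δ₁ ↔ i ∈ Δ₂)) :
    erasePos s Δ₁ ≠ erasePos s Δ₂ := by
  intro heq
  have htail := erasedRange_eq_of_erasePos_eq heq hm.le hagree
  obtain ⟨r, hr⟩ : ∃ r, s.length - m = r + 1 := ⟨s.length - m - 1, by omega⟩
  rw [hr, erasedRange_succ_of_notMem s r hm2 hm] at htail
  obtain ⟨j, hmj, hj, hdeleted, hjlen, hsj⟩ :=
    exists_first_kept_of_erasedRange_eq_cons s (by omega) htail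
  obtain ⟨t, htb, ht⟩ : ∃ t < b, m + t ∉ Δ₁ := by simpa using not_exists.1 hr1 m
  have hjt : j ≤ m + t := not_lt.1 fun h => ht (hdeleted _ (by omega) h)
  have hm_lt_j : m < j := lt_of_le_of_ne hmj (by rintro rfl; exact hj hm1)
  apply hs m j hm_lt_j (by omega) (by omega)
  simp only [window, List.drop_eq_getElem_cons hm, List.drop_eq_getElem_cons hjlen, hsj]
  rfl

theorem stmt14_general {A : Type*} (b : ℕ) (s : List A) (hs : IsCDB s b 1)
    (Δ₁ Δ₂ : Finset ℕ)
    (h1 : Δ₁ ⊆ Finset.range s.length) (h2 : Δ₂ ⊆ Finset.range s.length)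
    -- neither set contains a run of b consecutive positions
    (hr1 : ¬ ∃ j : ℕ, ∀ t : ℕ, t < b → j + t ∈ Δ₁)
    (hr2 : ¬ ∃ j : ℕ, ∀ t : ℕ, t < b → j + t ∈ Δ₂)
    (heq : erasePos s Δ₁ = erasePos s Δ₂) :
    Δ₁ = Δ₂ := by
  by_contra hne
  have hdiff : (symmDiff Δ₁ Δ₂).Nonempty :=
    Finset.nonempty_iff_ne_empty.2 (mt Finset.symmDiff_eq_empty.1 hne)
  set m := (symmDiff Δ₁ Δ₂).min' hdiff
  have hagree : ∀ i < m, (i ∈ Δ₁ ↔ i ∈ Δ₂) := fun i hi => by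
    have := mt (Finset.min'_le _ i) (not_le.2 hi)
    rw [Finset.mem_symmDiff] at this
    tauto
  rcases Finset.mem_symmDiff.1 (Finset.min'_mem _ hdiff) with ⟨hm1, hm2⟩ | ⟨hm2, hm1⟩
  · exact erasePos_ne_of_first_diff hs hr1 (Finset.mem_range.1 (h1 hm1)) hm1 hm2 hagree heq
  · exact erasePos_ne_of_first_diff hs hr2 (Finset.mem_range.1 (h2 hm2)) hm2 hm1
      (fun i hi => (hagree i hi).symm) heq.symm

theorem stmt14 {A : Type*} (b : ℕ) (hb : 2 ≤ b) (s : List A) (hs : IsCDB s b 1)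
    (Δ₁ Δ₂ : Finset ℕ)
    (h1 : Δ₁ ⊆ Finset.range s.length) (h2 : Δ₂ ⊆ Finset.range s.length)
    -- neither set contains a run of b consecutive positions
    (hr1 : ¬ ∃ j : ℕ, ∀ t : ℕ, t < b → j + t ∈ Δ₁)
    (hr2 : ¬ ∃ j : ℕ, ∀ t : ℕ, t < b → j + t ∈ Δ₂)
    (heq : erasePos s Δ₁ = erasePos s Δ₂) :
    Δ₁ = Δ₂ :=
  stmt14_general b s hs Δ₁ Δ₂ h1 h2 hr1 hr2 heq
end

section
/- Let Σ be a finite alphabet, let b ≥ 3, and let s ∈ Σ^n be a (b,1)-constrained de Bruijn sequence. For a multiplicity function m : {1,…,n} → ℕ, let s(m) denote the word obtained by writing, in order, m(i) copies of s_i for i = 1,…,n (so positions with m(i) = 0 are deleted and positions with m(i) ≥ 2 suffer sticky insertions). Suppose m, m' : {1,…,n} → ℕ are such that in each of them the set of positions with multiplicity 0 contains at most b−2 consecutive integers. If s(m) = s(m'), then m = m'. In particular, the locations of all deletions and all sticky insertions are uniquely determined from s and the received word. -/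
/-- The received word obtained by reading the symbol at (0-based) position `i` of `s`
exactly `m i` times, in order (`m i = 0` is a deletion, `m i ≥ 2` sticky insertions). -/
def expand {A : Type*} (s : List A) (m : ℕ → ℕ) : List A :=
  (((List.range s.length).zip s).map fun p => List.replicate (m p.1) p.2).flatten

/-!
Induct on `s = a :: s'`. If the two multiplicities of the first symbol `a` differ, say
`m 0 < m' 0`, cancelling the common prefix of `a`'s shows that the received word of `s'` under
`m` starts with `a`. Its first letter is `s_{j+1}` where positions `1, …, j` are all deleted, so
`j ≤ b - 2`; hence `s_0 = s_{j+1}` at distance at most `b - 1`, which the de Bruijn property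
forbids. So `m 0 = m' 0`, and the prefixes cancel, leaving the same problem for `s'`.
-/

def NoZeroRun (m : ℕ → ℕ) (n r : ℕ) : Prop :=
  ¬ ∃ j : ℕ, j + r ≤ n ∧ ∀ t : ℕ, t < r → m (j + t) = 0

theorem NoZeroRun.tail {m : ℕ → ℕ} {n r : ℕ} (h : NoZeroRun m (n + 1) r) :
    NoZeroRun (fun i => m (i + 1)) n r := by
  rintro ⟨j, hjn, hzero⟩
  refine h ⟨j + 1, by omega, fun t ht => ?_⟩
  simpa only [Nat.add_right_comm] using hzero t ht

theorem IsCDB.tail {A : Type*} {a : A} {s : List A} {b k : ℕ} (h : IsCDB (a :: s) b k) :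
    IsCDB s b k := fun i j hij hji hjk => by
  simpa [window] using h (i + 1) (j + 1) (by omega) (by omega) (by simp; omega)

theorem IsCDB.getElem_ne {A : Type*} {s : List A} {b i j : ℕ} (h : IsCDB s b 1)
    (hij : i < j) (hji : j - i ≤ b - 1) (hj : j < s.length) :
    s[i] ≠ s[j] := fun heq =>
  h i j hij hji hj <| by
    rw [window, window, List.drop_eq_getElem_cons hj, List.drop_eq_getElem_cons (hij.trans hj),
      heq, List.take_one, List.take_one, List.head?_cons, List.head?_cons]

@[simp]
theorem expand_nil {A : Type*} (m : ℕ → ℕ) : expand ([] : List A) m = [] := rfl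

@[simp]
theorem expand_cons {A : Type*} (a : A) (s : List A) (m : ℕ → ℕ) :
    expand (a :: s) m = List.replicate (m 0) a ++ expand s (fun i => m (i + 1)) := by
  simp [expand, List.range_succ_eq_map, List.zip_map_left, Function.comp_def]

theorem exists_getElem_eq_of_expand_eq_cons {A : Type*} {s : List A} {m : ℕ → ℕ} {a : A}
    {w : List A} (h : expand s m = a :: w) :
    ∃ j, ∃ hj : j < s.length, (∀ t, t < j → m t = 0) ∧ s[j] = a := by
  induction s generalizing m w with
  | nil => simp at h
  | cons x s ih =>
    rw [expand_cons] at h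
    obtain h0 | h0 := Nat.eq_zero_or_pos (m 0)
    · rw [h0, List.replicate_zero, List.nil_append] at h
      obtain ⟨j, hj, hzero, hja⟩ := ih h
      refine ⟨j + 1, by simpa using hj, fun t ht => ?_, by simpa using hja⟩
      cases t with
      | zero => exact h0
      | succ t => exact hzero t (by omega)
    · obtain ⟨k, hk⟩ := Nat.exists_eq_succ_of_ne_zero h0.ne'
      rw [hk, List.replicate_succ, List.cons_append, List.cons.injEq] at h
      exact ⟨0, by simp, fun t ht => absurd ht (Nat.not_lt_zero t), h.1⟩

theorem List.exists_eq_cons_of_replicate_append_eq {α : Type*} {a : α} {p q : ℕ}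
    {l l' : List α} (h : replicate p a ++ l = replicate q a ++ l') (hpq : p < q) :
    ∃ w, l = a :: w := by
  obtain ⟨k, rfl⟩ : ∃ k, q = p + (k + 1) := ⟨q - p - 1, by omega⟩
  rw [replicate_add, append_assoc, replicate_succ, cons_append] at h
  exact ⟨_, append_cancel_left h⟩

theorem expand_tail_ne_cons_head {A : Type*} {b : ℕ} {a : A} {s : List A}
    (hs : IsCDB (a :: s) b 1) {m : ℕ → ℕ} (hm : NoZeroRun m (s.length + 1) (b - 1))
    (w : List A) : expand s (fun i => m (i + 1)) ≠ a :: w := fun h => by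
  obtain ⟨j, hj, hzero, hja⟩ := exists_getElem_eq_of_expand_eq_cons h
  -- positions `1, …, j` are deleted, so they cannot contain a run of length `b - 1`
  have hjb : j + 1 ≤ b - 1 := by
    by_contra! hlong
    refine hm ⟨j + 1 - (b - 1), by omega, fun t ht => ?_⟩
    have := hzero (j - (b - 1) + t) (by omega)
    rwa [show j - (b - 1) + t + 1 = j + 1 - (b - 1) + t by omega] at this
  exact hs.getElem_ne (i := 0) (j := j + 1) (by omega) (by omega) (by simpa using hj)
    (by simpa using hja.symm)

theorem eq_of_expand_eq {A : Type*} {b : ℕ} {s : List A} (hs : IsCDB s b 1) {m m' : ℕ → ℕ}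
    (hm : NoZeroRun m s.length (b - 1)) (hm' : NoZeroRun m' s.length (b - 1))
    (heq : expand s m = expand s m') :
    ∀ i : ℕ, i < s.length → m i = m' i := by
  induction s generalizing m m' with
  | nil => simp
  | cons a s ih =>
    rw [expand_cons, expand_cons] at heq
    have hhead : m 0 = m' 0 := by
      rcases lt_trichotomy (m 0) (m' 0) with hlt | heq0 | hlt
      · obtain ⟨w, hw⟩ := List.exists_eq_cons_of_replicate_append_eq heq hlt
        exact absurd hw (expand_tail_ne_cons_head hs hm w)
      · exact heq0
      · obtain ⟨w, hw⟩ := List.exists_eq_cons_of_replicate_append_eq heq.symm hlt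
        exact absurd hw (expand_tail_ne_cons_head hs hm' w)
    rw [hhead] at heq
    have htail := ih hs.tail hm.tail hm'.tail (List.append_cancel_left heq)
    rintro (_ | i) hi
    · exact hhead
    · exact htail i (by simpa using hi)

theorem stmt16_general {A : Type*} (b : ℕ) (s : List A) (hs : IsCDB s b 1)
    (m m' : ℕ → ℕ)
    -- the set of deleted positions contains at most b-2 consecutive integers,
    -- i.e. there is no run of b-1 consecutive positions all with multiplicity 0
    (hm : ¬ ∃ j : ℕ, j + (b - 1) ≤ s.length ∧ ∀ t : ℕ, t < b - 1 → m (j + t) = 0)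
    (hm' : ¬ ∃ j : ℕ, j + (b - 1) ≤ s.length ∧ ∀ t : ℕ, t < b - 1 → m' (j + t) = 0)
    (heq : expand s m = expand s m') :
    ∀ i : ℕ, i < s.length → m i = m' i :=
  eq_of_expand_eq hs hm hm' heq

theorem stmt16 {A : Type*} (b : ℕ) (hb : 3 ≤ b) (s : List A) (hs : IsCDB s b 1)
    (m m' : ℕ → ℕ)
    -- the set of deleted positions contains at most b-2 consecutive integers,
    -- i.e. there is no run of b-1 consecutive positions all with multiplicity 0
    (hm : ¬ ∃ j : ℕ, j + (b - 1) ≤ s.length ∧ ∀ t : ℕ, t < b - 1 → m (j + t) = 0)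
    (hm' : ¬ ∃ j : ℕ, j + (b - 1) ≤ s.length ∧ ∀ t : ℕ, t < b - 1 → m' (j + t) = 0)
    (heq : expand s m = expand s m') :
    ∀ i : ℕ, i < s.length → m i = m' i :=
  stmt16_general b s hs m m' hm hm' heq
end

section
/- Let Σ be a finite alphabet of size q, let b, k be integers with q^k ≥ b ≥ 2, and set ℓ = k + b − 2. Let x, x' ∈ Σ^n be (b,k)-constrained de Bruijn sequences with n ≥ ℓ. Suppose t ≥ 1 and j_1 ≤ j_2 ≤ ⋯ ≤ j_t and j'_1 ≤ j'_2 ≤ ⋯ ≤ j'_t are nondecreasing sequences of read positions in {1,…,n−ℓ+1} satisfying: j_1 = j'_1 = 1 (the first ℓ-symbol read is error-free), j_t = j'_t = n−ℓ+1 (the last ℓ-symbol read is not deleted), and j_{r+1} − j_r ≤ b−1 and j'_{r+1} − j'_r ≤ b−1 for all r (a repeated index corresponds to a sticky insertion and a gap of size g+1 to a burst of g ≤ b−2 deletions of ℓ-symbol reads). If x[j_r, j_r+ℓ−1] = x'[j'_r, j'_r+ℓ−1] for all 1 ≤ r ≤ t, then x = x' and j_r = j'_r for all r. In other words, a (b,k)-constrained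 de Bruijn sequence can be uniquely recovered in the acyclic ℓ-symbol read channel from any received sequence of ℓ-symbol reads corrupted by any number of sticky insertions and any number of bursts of deletions of length at most b−2. -/
/-!
Decode the reads one by one, keeping the invariant that the positions agree so far and that `x`
and `x'` agree up to the end of the last decoded read. If the next positions `i < i'` differed,
both lie within `b - 1` of the previous position `p`, so the `k`-window of `x` at `i` ends inside
the common prefix of length `p + ℓ` and hence is also the `k`-window of `x'` at `i`; since the reads
agree it is the `k`-window of `x'` at `i'` as well, contradicting the de Bruijn constraint on `x'`.
Once the positions agree, the new read extends the common prefix up to `i + ℓ`.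
-/

theorem monotoneOn_Iio_of_le_succ {α : Type*} [Preorder α] {f : ℕ → α} {t : ℕ}
    (hf : ∀ r, r + 1 < t → f r ≤ f (r + 1)) : MonotoneOn f (Set.Iio t) := by
  intro r _ s hs hrs
  induction hrs with
  | refl => exact le_rfl
  | step _ ih => exact (ih (by simp only [Set.mem_Iio] at hs ⊢; omega)).trans (hf _ hs)

theorem window_eq_of_take_eq {A : Type*} {x x' : List A} {m : ℕ} (h : x.take m = x'.take m)
    {i k : ℕ} (hik : i + k ≤ m) : window x i k = window x' i k := by
  have hwindow : ∀ s : List A, window s i k = window (s.take m) i k := fun s => by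
    rw [window, window, List.drop_take, List.take_take, min_eq_left (by omega)]
  rw [hwindow x, hwindow x', h]

theorem take_window {A : Type*} (s : List A) (i : ℕ) {k l : ℕ} (h : k ≤ l) :
    (window s i l).take k = window s i k := by
  rw [window, window, List.take_take, min_eq_left h]

theorem take_add_eq_append_window {A : Type*} (s : List A) (i l : ℕ) :
    s.take (i + l) = s.take i ++ window s i l :=
  List.take_add

section Decoding

variable {A : Type*} {x x' : List A} {b k ℓ p i i' : ℕ}

theorem IsCDB.eq_of_window_eq_of_take_eq (hx' : IsCDB x' b k) (hℓ : k + b - 2 ≤ ℓ)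
    (htake : x.take (p + ℓ) = x'.take (p + ℓ)) (hp : p ≤ i) (hii' : i ≤ i')
    (hi' : i' ≤ p + (b - 1)) (hlen' : i' ≤ x'.length - ℓ)
    (hw : window x i ℓ = window x' i' ℓ) : i = i' := by
  by_contra hne
  have hprefix : window x i k = window x' i k := window_eq_of_take_eq htake (by omega)
  have hread : window x i k = window x' i' k := by
    rw [← take_window x i (by omega : k ≤ ℓ), ← take_window x' i' (by omega : k ≤ ℓ), hw]
  exact hx' i i' (by omega) (by omega) (by omega) (hprefix.symm.trans hread)

theorem IsCDB.eq_and_take_eq_of_window_eq (hk : 0 < k) (hx : IsCDB x b k) (hx' : IsCDB x' b k)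
    (hℓ : k + b - 2 ≤ ℓ) (htake : x.take (p + ℓ) = x'.take (p + ℓ))
    (hp : p ≤ i) (hi : i ≤ p + (b - 1)) (hlen : i ≤ x.length - ℓ)
    (hp' : p ≤ i') (hi' : i' ≤ p + (b - 1)) (hlen' : i' ≤ x'.length - ℓ)
    (hw : window x i ℓ = window x' i' ℓ) : i = i' ∧ x.take (i + ℓ) = x'.take (i + ℓ) := by
  have hii' : i = i' := by
    rcases le_total i i' with h | h
    · exact hx'.eq_of_window_eq_of_take_eq hℓ htake hp h hi' hlen' hw
    · exact (hx.eq_of_window_eq_of_take_eq hℓ htake.symm hp' h hi hlen hw.symm).symm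
  subst hii'
  refine ⟨rfl, ?_⟩
  have hstart : x.take i = x'.take i := by
    have := congrArg (List.take i) htake
    rwa [List.take_take, List.take_take, min_eq_left (by omega : i ≤ p + ℓ)] at this
  rw [take_add_eq_append_window, take_add_eq_append_window, hstart, hw]

end Decoding

theorem stmt18_general {A : Type*} [Fintype A] (b k : ℕ) (hb : 2 ≤ b)
    (hq : b ≤ Fintype.card A ^ k)
    (n : ℕ)
    (x x' : List A) (hx : x.length = n) (hx' : x'.length = n)
    (hxc : IsCDB x b k) (hx'c : IsCDB x' b k)
    (t : ℕ) (ht : 1 ≤ t) (j j' : ℕ → ℕ)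
    -- the first ℓ-symbol read is error-free
    (hj0 : j 0 = 0) (hj'0 : j' 0 = 0)
    -- the last ℓ-symbol read is not deleted
    (hjt : j (t - 1) = n - (k + b - 2)) (hj't : j' (t - 1) = n - (k + b - 2))
    -- nondecreasing read positions with gaps of at most b-1
    (hmono : ∀ r : ℕ, r + 1 < t → j r ≤ j (r + 1) ∧ j (r + 1) - j r ≤ b - 1)
    (hmono' : ∀ r : ℕ, r + 1 < t → j' r ≤ j' (r + 1) ∧ j' (r + 1) - j' r ≤ b - 1)
    -- the two received sequences of ℓ-symbol reads coincide
    (hread : ∀ r : ℕ, r < t →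
        window x (j r) (k + b - 2) = window x' (j' r) (k + b - 2)) :
    x = x' ∧ ∀ r : ℕ, r < t → j r = j' r := by
  have hk : 0 < k := Nat.pos_of_ne_zero fun hk0 => by simp [hk0] at hq; omega
  have hlast : t - 1 ∈ Set.Iio t := Set.mem_Iio.2 (by omega)
  have hbound : ∀ r < t, j r ≤ n - (k + b - 2) ∧ j' r ≤ n - (k + b - 2) := fun r hr =>
    ⟨hjt ▸ monotoneOn_Iio_of_le_succ (fun s hs => (hmono s hs).1) hr hlast (by omega),
      hj't ▸ monotoneOn_Iio_of_le_succ (fun s hs => (hmono' s hs).1) hr hlast (by omega)⟩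
  have hdecode : ∀ r < t,
      j r = j' r ∧ x.take (j r + (k + b - 2)) = x'.take (j r + (k + b - 2)) := by
    intro r
    induction r with
    | zero => intro h0; simpa [hj0, hj'0, window] using hread 0 h0
    | succ r ih =>
      intro hr
      obtain ⟨hjr, htake⟩ := ih (by omega)
      have := hmono r hr
      have := hmono' r hr
      have := hbound (r + 1) hr
      exact hxc.eq_and_take_eq_of_window_eq hk hx'c le_rfl htake (by omega) (by omega)
        (by omega) (by omega) (by omega) (by omega) (hread (r + 1) hr)
  obtain ⟨-, hfull⟩ := hdecode (t - 1) (by omega)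
  refine ⟨?_, fun r hr => (hdecode r hr).1⟩
  rwa [List.take_of_length_le (by omega), List.take_of_length_le (by omega)] at hfull

theorem stmt18 {A : Type*} [Fintype A] (b k : ℕ) (hb : 2 ≤ b)
    (hq : b ≤ Fintype.card A ^ k)
    (n : ℕ) (hn : k + b - 2 ≤ n)
    (x x' : List A) (hx : x.length = n) (hx' : x'.length = n)
    (hxc : IsCDB x b k) (hx'c : IsCDB x' b k)
    (t : ℕ) (ht : 1 ≤ t) (j j' : ℕ → ℕ)
    -- the first ℓ-symbol read is error-free
    (hj0 : j 0 = 0) (hj'0 : j' 0 = 0)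
    -- the last ℓ-symbol read is not deleted
    (hjt : j (t - 1) = n - (k + b - 2)) (hj't : j' (t - 1) = n - (k + b - 2))
    -- nondecreasing read positions with gaps of at most b-1
    (hmono : ∀ r : ℕ, r + 1 < t → j r ≤ j (r + 1) ∧ j (r + 1) - j r ≤ b - 1)
    (hmono' : ∀ r : ℕ, r + 1 < t → j' r ≤ j' (r + 1) ∧ j' (r + 1) - j' r ≤ b - 1)
    -- the two received sequences of ℓ-symbol reads coincide
    (hread : ∀ r : ℕ, r < t →
        window x (j r) (k + b - 2) = window x' (j' r) (k + b - 2)) :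
    x = x' ∧ ∀ r : ℕ, r < t → j r = j' r :=
  stmt18_general b k hb hq n x x' hx hx' hxc hx'c t ht j j' hj0 hj'0 hjt hj't hmono hmono' hread
end

section
/- Let Σ be a finite alphabet of size q, let b, k be integers with q^k ≥ b ≥ 2, and set ℓ = k + b − 2. Let x, x' ∈ Σ^n be cyclic (b,k)-constrained de Bruijn sequences. Suppose t ≥ 1, and suppose 1 ≤ j_1 < j_2 < ⋯ < j_t ≤ n and 1 ≤ j'_1 < j'_2 < ⋯ < j'_t ≤ n are the retained read positions with multiplicities m_r ≥ 1 and m'_r ≥ 1 (each read repeated due to sticky insertions), satisfying the gap conditions j_{r+1} − j_r ≤ b−1 for 1 ≤ r < t and j_1 + n − j_t ≤ b−1, and likewise for the j'_r (so every burst of deleted ℓ-symbol reads, including a possible cyclic burst, has length at most b−2). If the two received lists of cyclic ℓ-symbol reads coincide, i.e., the concatenation over r of m_r copies of the cyclic window (x_{j_r}, x_{j_r+1}, …, x_{j_r+ℓ−1}) (indices mod n) equals the concatenation over r of m'_r copies of (x'_{j'_r}, …, x'_{j'_r+ℓ−1}), then x' is a cyclic shift of x. In other words, a cyclic (b,k)-constrained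 de Bruijn codeword can be recovered (up to cyclic shift, i.e., as a codeword of the cyclic code) in the ℓ-symbol read channel after any number of sticky insertions and any number of bursts of deletions of length at most b−2, including one possible cyclic burst. -/
/-- The cyclic window of `s` of length `w` starting at (0-based) position `i`,
with indices taken modulo the length of `s`. -/
def cycWin {A : Type*} [Inhabited A] (s : List A) (i w : ℕ) : List A :=
  (List.range w).map fun t => s.getD ((i + t) % s.length) default

/-- `x` is a cyclic `(b,k)`-constrained de Bruijn sequence: any two cyclic windows of
length `k` starting at positions at cyclic distance between `1` and `b-1` are distinct. -/
def IsCycCDB {A : Type*} [Inhabited A] (x : List A) (b k : ℕ) : Prop :=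
  ∀ i : ℕ, i < x.length → ∀ d : ℕ, 1 ≤ d → d ≤ b - 1 →
    cycWin x i k ≠ cycWin x ((i + d) % x.length) k

/-
Consecutive retained reads are distinct, because their length-`k` prefixes are windows at cyclic
distance between `1` and `b - 1`. So the received list is a run-length encoding of the retained
reads, and collapsing its runs recovers them, in order, for `x` and `x'` alike. Two consecutive
common reads fix the gap between them: if `x` stepped by `d` and `x'` by `d' > d`, then the
`k`-window of `x'` at offset `d` of the first read (still inside it, as `d ≤ b - 2`) would equal
its `k`-window at offset `d'`. Hence the read positions of `x` are those of `x'` shifted by a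
constant `c`; as the constraint forces `k ≥ 1`, the reads of `x'` (of length
`k + b - 2 ≥ b - 1`) cover the whole cycle, and `x'[u] = x[u + c]` for every `u`.
-/

lemma exists_le_lt_add_of_gap_le {p : ℕ → ℕ} {w : ℕ} :
    ∀ {t : ℕ}, (∀ r < t, p (r + 1) ≤ p r + w) →
      ∀ {v : ℕ}, p 0 ≤ v → v < p t + w → ∃ r ≤ t, p r ≤ v ∧ v < p r + w
  | 0, _, _, h0, hv => ⟨0, le_rfl, h0, hv⟩
  | t + 1, hgap, v, h0, hv => by
    by_cases hvt : p (t + 1) ≤ v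
    · exact ⟨t + 1, le_rfl, hvt, hv⟩
    · obtain ⟨r, hr, hpr⟩ :=
        exists_le_lt_add_of_gap_le (t := t) (fun r hr => hgap r (by omega)) h0
          (by have := hgap t (by omega); omega)
      exact ⟨r, by omega, hpr⟩

lemma exists_add_mod_eq_of_gap_le {p : ℕ → ℕ} {t w n u : ℕ} (hp0 : p 0 < n)
    (hgap : ∀ r < t, p (r + 1) ≤ p r + w) (hcyc : p 0 + n ≤ p t + w) (hu : u < n) :
    ∃ r ≤ t, ∃ s < w, (p r + s) % n = u := by
  obtain ⟨v, hv0, hvn, hvu⟩ : ∃ v, p 0 ≤ v ∧ v < p 0 + n ∧ v % n = u := by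
    by_cases h : p 0 ≤ u
    · exact ⟨u, h, by omega, Nat.mod_eq_of_lt hu⟩
    · exact ⟨u + n, by omega, by omega, by rw [Nat.add_mod_right, Nat.mod_eq_of_lt hu]⟩
  obtain ⟨r, hr, hpr, hvr⟩ := exists_le_lt_add_of_gap_le hgap hv0 (by omega)
  exact ⟨r, hr, v - p r, by omega, by rwa [Nat.add_sub_cancel' hpr]⟩

lemma add_eq_add_of_sub_eq_sub {p q : ℕ → ℕ} {t : ℕ} (hp : ∀ r, r + 1 < t → p r ≤ p (r + 1))
    (hq : ∀ r, r + 1 < t → q r ≤ q (r + 1))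
    (h : ∀ r, r + 1 < t → p (r + 1) - p r = q (r + 1) - q r) :
    ∀ r < t, p r + q 0 = q r + p 0
  | 0, _ => Nat.add_comm _ _
  | r + 1, hr => by
    have := add_eq_add_of_sub_eq_sub hp hq h r (by omega)
    have := h r hr; have := hp r hr; have := hq r hr
    omega

section CyclicWindow

variable {A : Type*} [Inhabited A]

@[simp]
lemma length_cycWin (s : List A) (i w : ℕ) : (cycWin s i w).length = w := by
  simp [cycWin]

@[simp]
lemma getElem_cycWin (s : List A) (i w u : ℕ) (h : u < (cycWin s i w).length) :
    (cycWin s i w)[u] = s.getD ((i + u) % s.length) default := by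
  simp [cycWin]

lemma cycWin_eq_of_mod_eq {s : List A} {i i' : ℕ} (h : i % s.length = i' % s.length) (w : ℕ) :
    cycWin s i w = cycWin s i' w := by
  simp only [cycWin, Nat.add_mod i, Nat.add_mod i', h]

lemma drop_cycWin (s : List A) (i w o : ℕ) :
    (cycWin s i w).drop o = cycWin s (i + o) (w - o) :=
  List.ext_getElem (by simp) fun u _ _ => by simp [Nat.add_assoc]

lemma take_cycWin (s : List A) (i w u : ℕ) :
    (cycWin s i w).take u = cycWin s i (min u w) :=
  List.ext_getElem (by simp) fun _ _ _ => by simp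

lemma cycWin_add_eq_of_eq {x y : List A} {i i' w o u : ℕ}
    (h : cycWin x i w = cycWin y i' w) (hou : o + u ≤ w) :
    cycWin x (i + o) u = cycWin y (i' + o) u := by
  have key := congrArg (fun l => (l.drop o).take u) h
  simpa only [drop_cycWin, take_cycWin, show min u (w - o) = u by omega] using key

lemma cycWin_eq_of_eq_of_le {x y : List A} {i i' w u : ℕ}
    (h : cycWin x i w = cycWin y i' w) (hu : u ≤ w) : cycWin x i u = cycWin y i' u := by
  simpa using cycWin_add_eq_of_eq (o := 0) h (by omega)

lemma eq_rotate_of_cycWin_eq {x x' : List A} (hlen : x.length = x'.length) {p : ℕ → ℕ}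
    {t w c : ℕ} (hp0 : p 0 < x'.length) (hgap : ∀ r < t, p (r + 1) ≤ p r + w)
    (hcyc : p 0 + x'.length ≤ p t + w)
    (hwin : ∀ r ≤ t, cycWin x (p r + c) w = cycWin x' (p r) w) : x' = x.rotate c := by
  refine List.ext_getElem (by simp [hlen]) fun u hu hu' => ?_
  obtain ⟨r, hr, s, hs, hmod⟩ := exists_add_mod_eq_of_gap_le hp0 hgap hcyc hu
  have hentry := List.getElem_of_eq (hwin r hr) (i := s) (by simpa using hs)
  simp only [getElem_cycWin] at hentry
  rw [hlen, hmod, Nat.add_right_comm, ← Nat.mod_add_mod, hmod] at hentry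
  rw [List.getElem_rotate, ← List.getD_eq_getElem _ default, ← List.getD_eq_getElem _ default,
    hlen, hentry]

end CyclicWindow

namespace IsCycCDB

variable {A : Type*} [Inhabited A] {x x' : List A} {b k : ℕ}

lemma cycWin_ne (hx : IsCycCDB x b k) (hne : x ≠ []) {i i' w : ℕ} (hkw : k ≤ w)
    (hlt : i < i') (hgap : i' - i ≤ b - 1) : cycWin x i w ≠ cycWin x i' w := by
  intro h
  have hlen : 0 < x.length := List.length_pos_iff.mpr hne
  apply hx (i % x.length) (Nat.mod_lt _ hlen) (i' - i) (by omega) hgap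
  have hi : (i % x.length) % x.length = i % x.length := Nat.mod_mod _ _
  have hi' : (i % x.length + (i' - i)) % x.length % x.length = i' % x.length := by
    rw [Nat.mod_mod, Nat.mod_add_mod, Nat.add_sub_cancel' hlt.le]
  rw [cycWin_eq_of_mod_eq hi, cycWin_eq_of_mod_eq hi']
  exact cycWin_eq_of_eq_of_le h hkw

lemma pos (hx : IsCycCDB x b k) (hne : x ≠ []) (hb : 2 ≤ b) : 0 < k := by
  by_contra hk
  obtain rfl : k = 0 := by omega
  exact hx.cycWin_ne hne le_rfl (zero_lt_one (α := ℕ)) (by omega) (by simp [cycWin])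

lemma sub_le_sub_of_cycWin_eq (hx' : IsCycCDB x' b k) (hne' : x' ≠ []) {p q p' q' : ℕ}
    (hpq : p ≤ q) (hgap' : q' - p' ≤ b - 1)
    (hW : cycWin x p (k + b - 2) = cycWin x' p' (k + b - 2))
    (hnext : cycWin x q k = cycWin x' q' k) : q' - p' ≤ q - p := by
  by_contra! hlt
  have hshift : cycWin x (p + (q - p)) k = cycWin x' (p' + (q - p)) k :=
    cycWin_add_eq_of_eq hW (by omega)
  rw [Nat.add_sub_cancel' hpq] at hshift
  exact hx'.cycWin_ne hne' le_rfl (by omega) (by omega) (hshift.symm.trans hnext)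

lemma sub_eq_sub_of_cycWin_eq (hx : IsCycCDB x b k) (hx' : IsCycCDB x' b k)
    (hne : x ≠ []) (hne' : x' ≠ []) {p q p' q' : ℕ} (hpq : p ≤ q) (hpq' : p' ≤ q')
    (hgap : q - p ≤ b - 1) (hgap' : q' - p' ≤ b - 1)
    (hW : cycWin x p (k + b - 2) = cycWin x' p' (k + b - 2))
    (hnext : cycWin x q k = cycWin x' q' k) : q - p = q' - p' :=
  le_antisymm (hx.sub_le_sub_of_cycWin_eq hne hpq' hgap hW.symm hnext.symm)
    (hx'.sub_le_sub_of_cycWin_eq hne' hpq hgap' hW hnext)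

end IsCycCDB

section RunLength

variable {α : Type*} [DecidableEq α]

lemma splitBy_flatten_map_replicate {f : ℕ → α} {m : ℕ → ℕ} {t : ℕ}
    (hm : ∀ r < t, 0 < m r) (hf : ∀ r, r + 1 < t → f r ≠ f (r + 1)) :
    ((List.range t).map fun r => List.replicate (m r) (f r)).flatten.splitBy (· == ·)
      = (List.range t).map fun r => List.replicate (m r) (f r) := by
  apply List.splitBy_flatten
  · simp only [List.mem_map, List.mem_range, not_exists, not_and]
    intro r hr h
    exact (hm r hr).ne' ((List.replicate_eq_nil_iff _).mp h)
  · simp only [List.mem_map, List.mem_range]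
    rintro _ ⟨r, -, rfl⟩
    exact List.isChain_replicate_of_rel _ (by simp)
  · rw [List.isChain_map, List.isChain_range]
    intro r hr
    refine ⟨?_, ?_, ?_⟩ <;>
      simp [hf r (by omega), (hm r (by omega)).ne', (hm (r + 1) (by omega)).ne']

lemma eq_of_flatten_map_replicate_eq {f g : ℕ → α} {m m' : ℕ → ℕ} {t : ℕ}
    (hm : ∀ r < t, 0 < m r) (hm' : ∀ r < t, 0 < m' r)
    (hf : ∀ r, r + 1 < t → f r ≠ f (r + 1)) (hg : ∀ r, r + 1 < t → g r ≠ g (r + 1))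
    (h : ((List.range t).map fun r => List.replicate (m r) (f r)).flatten
      = ((List.range t).map fun r => List.replicate (m' r) (g r)).flatten) :
    ∀ r < t, f r = g r := by
  intro r hr
  have key := congrArg (·.splitBy (· == ·)) h
  simp only [splitBy_flatten_map_replicate hm hf, splitBy_flatten_map_replicate hm' hg] at key
  have hrep := List.getElem_of_eq key (i := r) (by simpa using hr)
  simp only [List.getElem_map, List.getElem_range] at hrep
  exact List.eq_of_mem_replicate (hrep ▸ List.mem_replicate.mpr ⟨(hm r hr).ne', rfl⟩)

end RunLength

theorem stmt19_general {A : Type*} [Inhabited A] (b k : ℕ) (hb : 2 ≤ b)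
    (n : ℕ) (hn : 1 ≤ n)
    (x x' : List A) (hx : x.length = n) (hx' : x'.length = n)
    (hxc : IsCycCDB x b k) (hx'c : IsCycCDB x' b k)
    (t : ℕ) (ht : 1 ≤ t)
    (j j' : ℕ → ℕ) (m m' : ℕ → ℕ)
    -- retained read positions, strictly increasing within {0,…,n-1}
    (hj'lt : ∀ r : ℕ, r < t → j' r < n)
    (hjmono : ∀ r : ℕ, r + 1 < t → j r < j (r + 1))
    (hj'mono : ∀ r : ℕ, r + 1 < t → j' r < j' (r + 1))
    -- multiplicities (sticky insertions) are at least one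
    (hm : ∀ r : ℕ, r < t → 1 ≤ m r) (hm' : ∀ r : ℕ, r < t → 1 ≤ m' r)
    -- every burst of deleted reads, including the cyclic one, has length at most b-2
    (hgap : ∀ r : ℕ, r + 1 < t → j (r + 1) - j r ≤ b - 1)
    (hgap' : ∀ r : ℕ, r + 1 < t → j' (r + 1) - j' r ≤ b - 1)
    (hcyc' : j' 0 + n - j' (t - 1) ≤ b - 1)
    -- the two received lists of cyclic (k+b-2)-symbol reads coincide
    (hread :
      ((List.range t).map fun r =>
          List.replicate (m r) (cycWin x (j r) (k + b - 2))).flatten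
        = ((List.range t).map fun r =>
            List.replicate (m' r) (cycWin x' (j' r) (k + b - 2))).flatten) :
    ∃ d : ℕ, x' = x.rotate d := by
  classical
  have hne : x ≠ [] := List.ne_nil_of_length_pos (by omega)
  have hne' : x' ≠ [] := List.ne_nil_of_length_pos (by omega)
  have hk := hxc.pos hne hb
  have hwin : ∀ r < t, cycWin x (j r) (k + b - 2) = cycWin x' (j' r) (k + b - 2) :=
    eq_of_flatten_map_replicate_eq hm hm'
      (fun r hr => hxc.cycWin_ne hne (by omega) (hjmono r hr) (hgap r hr))
      (fun r hr => hx'c.cycWin_ne hne' (by omega) (hj'mono r hr) (hgap' r hr)) hread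
  have hstep (r : ℕ) (hr : r + 1 < t) : j (r + 1) - j r = j' (r + 1) - j' r :=
    hxc.sub_eq_sub_of_cycWin_eq hx'c hne hne' (hjmono r hr).le (hj'mono r hr).le
      (hgap r hr) (hgap' r hr) (hwin r (by omega))
      (cycWin_eq_of_eq_of_le (hwin (r + 1) hr) (by omega))
  have hoffset := add_eq_add_of_sub_eq_sub (fun r hr => (hjmono r hr).le)
    (fun r hr => (hj'mono r hr).le) hstep
  refine ⟨j 0 + n - j' 0, eq_rotate_of_cycWin_eq (p := j') (t := t - 1) (w := k + b - 2)
    (by omega) (by rw [hx']; exact hj'lt 0 (by omega)) (fun r hr => ?_) ?_ fun r hr => ?_⟩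
  · have := hgap' r (by omega); have := hj'mono r (by omega)
    omega
  · have := hj'lt (t - 1) (by omega)
    rw [hx']
    omega
  · rw [← hwin r (by omega)]
    apply cycWin_eq_of_mod_eq
    rw [hx, show j' r + (j 0 + n - j' 0) = j r + n by
      have := hoffset r (by omega); have := hj'lt 0 (by omega); omega, Nat.add_mod_right]

theorem stmt19 {A : Type*} [Fintype A] [Inhabited A] (b k : ℕ) (hb : 2 ≤ b)
    (hq : b ≤ Fintype.card A ^ k)
    (n : ℕ) (hn : 1 ≤ n)
    (x x' : List A) (hx : x.length = n) (hx' : x'.length = n)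
    (hxc : IsCycCDB x b k) (hx'c : IsCycCDB x' b k)
    (t : ℕ) (ht : 1 ≤ t)
    (j j' : ℕ → ℕ) (m m' : ℕ → ℕ)
    -- retained read positions, strictly increasing within {0,…,n-1}
    (hjlt : ∀ r : ℕ, r < t → j r < n) (hj'lt : ∀ r : ℕ, r < t → j' r < n)
    (hjmono : ∀ r : ℕ, r + 1 < t → j r < j (r + 1))
    (hj'mono : ∀ r : ℕ, r + 1 < t → j' r < j' (r + 1))
    -- multiplicities (sticky insertions) are at least one
    (hm : ∀ r : ℕ, r < t → 1 ≤ m r) (hm' : ∀ r : ℕ, r < t → 1 ≤ m' r)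
    -- every burst of deleted reads, including the cyclic one, has length at most b-2
    (hgap : ∀ r : ℕ, r + 1 < t → j (r + 1) - j r ≤ b - 1)
    (hgap' : ∀ r : ℕ, r + 1 < t → j' (r + 1) - j' r ≤ b - 1)
    (hcyc : j 0 + n - j (t - 1) ≤ b - 1)
    (hcyc' : j' 0 + n - j' (t - 1) ≤ b - 1)
    -- the two received lists of cyclic (k+b-2)-symbol reads coincide
    (hread :
      ((List.range t).map fun r =>
          List.replicate (m r) (cycWin x (j r) (k + b - 2))).flatten
        = ((List.range t).map fun r =>
            List.replicate (m' r) (cycWin x' (j' r) (k + b - 2))).flatten) :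
    ∃ d : ℕ, x' = x.rotate d :=
  stmt19_general b k hb n hn x x' hx hx' hxc hx'c t ht j j' m m' hj'lt hjmono hj'mono hm hm' hgap
    hgap' hcyc' hread
end
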